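/- arXiv:2102.11081 — 13 statements merged into one kernel-verified Lean document; each statement's English description precedes it below -/
import Mathlib

section
/- For every group G, the covariant isotropy group of G in the category of groups is isomorphic to G itself: there is a group isomorphism between Aut(Under.forget G), the group of natural automorphisms of the coslice projection functor Under.forget G : Under G ⥤ Grp, and G, which sends (the class of) g ∈ G to the natural automorphism whose component at an object (m : G ⟶ H) of Under G is conjugation by m(g) on H. -/
/-!
A natural endomorphism `α` of `Under.forget G` is determined by `t = α(x) ∈ G ∗ ⟨x⟩`:
naturality along the morphism `x ↦ a` of `G`-groups gives `α_m(a) = t(m, a)`.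
Model `G ∗ F(B)` as `F(G × B) ⋊ G`, the generator `(c, b)` standing for `c b c⁻¹`.
Evaluating at `a = 1` puts `t` in the free part `F(G)`; multiplicativity of `α` on
`G ∗ ⟨x₁, x₂⟩` at `x₁ x₂` says that the substitution `c ↦ (c, 1) (c, 2)` sends `t`
to `t(x₁) t(x₂)`. Comparing the first two letters of the reduced words forces `t` to be a single
generator `g x g⁻¹`, unless `t = 1`, which the injectivity of `α` excludes.
-/

universe u

open CategoryTheory SemidirectProduct

namespace FreeGroup

variable {S T : Type*}

theorem IsReduced.map_of_injective {f : S → T} (hf : Function.Injective f)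
    {L : List (S × Bool)} (hL : IsReduced L) : IsReduced (L.map (Prod.map f id)) :=
  List.isChain_map _ |>.2 <| hL.imp fun _ _ h hab => h (hf hab)

theorem toWord_map_of_injective [DecidableEq S] [DecidableEq T] {f : S → T}
    (hf : Function.Injective f) (n : FreeGroup S) :
    (map f n).toWord = n.toWord.map (Prod.map f id) := by
  conv_lhs => rw [← mk_toWord (x := n)]
  rw [map.mk, toWord_mk]
  exact (isReduced_toWord.map_of_injective hf).reduce_eq

def doubleLetter (i j : S → T) : S × Bool → List (T × Bool)
  | (s, true) => [(i s, true), (j s, true)]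
  | (s, false) => [(j s, false), (i s, false)]

theorem lift_mk_eq_mk_flatMap_doubleLetter (i j : S → T) (L : List (S × Bool)) :
    lift (fun s => of (i s) * of (j s)) (mk L) = mk (L.flatMap (doubleLetter i j)) := by
  induction L with
  | nil => rfl
  | cons a L ih =>
    rw [← List.singleton_append, ← mul_mk, _root_.map_mul, ih, List.flatMap_append, ← mul_mk]
    obtain ⟨s, _ | _⟩ := a
    · simp [lift_mk, of, inv_mk, invRev, mul_mk, doubleLetter]
    · rfl

variable {i j : S → T} (hi : Function.Injective i) (hj : Function.Injective j)
  (hij : ∀ s s', i s ≠ j s')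
include hi hj hij

theorem isReduced_flatMap_doubleLetter {L : List (S × Bool)} (hL : IsReduced L) :
    IsReduced (L.flatMap (doubleLetter i j)) := by
  rw [IsReduced, List.flatMap_def, List.isChain_flatten (by simp [doubleLetter])]
  refine ⟨?_, List.isChain_map _ |>.2 <| hL.imp ?_⟩
  · simp only [List.mem_map]
    rintro _ ⟨⟨s, _ | _⟩, -, rfl⟩ <;> simp [doubleLetter, hij, (hij _ _).symm]
  · rintro ⟨s, _ | _⟩ ⟨s', _ | _⟩ h <;> simp_all [doubleLetter, hi.eq_iff, hj.eq_iff]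

theorem eq_one_or_exists_eq_of_of_lift_eq_map_mul_map {n : FreeGroup S}
    (h : lift (fun s => of (i s) * of (j s)) n = map i n * map j n) :
    n = 1 ∨ ∃ s, n = of s := by
  classical
  have hsplit : IsReduced (n.toWord.map (Prod.map i id) ++ n.toWord.map (Prod.map j id)) := by
    refine List.isChain_append.2 ⟨isReduced_toWord.map_of_injective hi,
      isReduced_toWord.map_of_injective hj, ?_⟩
    simp only [List.getLast?_map, List.head?_map, Option.mem_map]
    rintro _ ⟨x, -, rfl⟩ _ ⟨y, -, rfl⟩ hxy
    exact absurd hxy (hij _ _)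
  have hwords : n.toWord.flatMap (doubleLetter i j) =
      n.toWord.map (Prod.map i id) ++ n.toWord.map (Prod.map j id) := by
    have := congrArg toWord h
    rwa [← mk_toWord (x := n), lift_mk_eq_mk_flatMap_doubleLetter, toWord_mk, mk_toWord,
      (isReduced_flatMap_doubleLetter hi hj hij isReduced_toWord).reduce_eq, toWord_mul,
      toWord_map_of_injective hi, toWord_map_of_injective hj, hsplit.reduce_eq] at this
  rcases hn : n.toWord with _ | ⟨⟨s, _ | _⟩, L⟩
  · exact .inl (toWord_eq_nil_iff.1 hn)
  · simp only [hn, List.flatMap_cons, doubleLetter, List.map_cons] at hwords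
    exact absurd (congrArg Prod.fst (List.cons.inj hwords).1) (hij s s).symm
  · cases L with
    | nil => exact .inr ⟨s, toWord_injective (by rw [hn, toWord_of])⟩
    | cons c L =>
      simp only [hn, List.flatMap_cons, doubleLetter, List.map_cons] at hwords
      exact absurd (congrArg Prod.fst (List.cons.inj (List.cons.inj hwords).2).1) (hij c.1 s).symm

end FreeGroup

section AdjoinFree

variable (G : Type*) [Group G] (B : Type*)

def AdjoinFree.translate : G →* MulAut (FreeGroup (G × B)) where
  toFun g := FreeGroup.freeGroupCongr ((Equiv.mulLeft g).prodCongr (Equiv.refl B))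
  map_one' := by
    apply MulEquiv.toMonoidHom_injective
    ext p
    simp [FreeGroup.freeGroupCongr]
  map_mul' g h := by
    apply MulEquiv.toMonoidHom_injective
    ext p
    simp [FreeGroup.freeGroupCongr, mul_assoc, Prod.map]

@[simp] theorem AdjoinFree.translate_of (g : G) (p : G × B) :
    translate G B g (FreeGroup.of p) = FreeGroup.of (g * p.1, p.2) := rfl

abbrev AdjoinFree := FreeGroup (G × B) ⋊[AdjoinFree.translate G B] G

end AdjoinFree

namespace AdjoinFree

variable {G B : Type*} [Group G]

def gen (b : B) : AdjoinFree G B := inl (FreeGroup.of (1, b))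

theorem gen_ne_one (b : B) : gen b ≠ (1 : AdjoinFree G B) := by
  rw [gen, ← map_one inl]
  exact inl_injective.ne (FreeGroup.of_ne_one _)

theorem inr_mul_gen_mul_inr_inv (g : G) (b : B) :
    inr g * gen b * inr g⁻¹ = (inl (FreeGroup.of (g, b)) : AdjoinFree G B) := by
  rw [gen, ← inl_aut, translate_of, mul_one]

variable {H : Type*} [Group H]

def subst (m : G →* H) (a : B → H) : AdjoinFree G B →* H :=
  SemidirectProduct.lift (FreeGroup.lift fun p => m p.1 * a p.2 * (m p.1)⁻¹) m fun g => by
    ext p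
    simp [mul_assoc]

@[simp] theorem subst_inr (m : G →* H) (a : B → H) (g : G) : subst m a (inr g) = m g := by
  simp [subst]

@[simp] theorem subst_inl_of (m : G →* H) (a : B → H) (p : G × B) :
    subst m a (inl (FreeGroup.of p)) = m p.1 * a p.2 * (m p.1)⁻¹ := by
  simp [subst]

@[simp] theorem subst_gen (m : G →* H) (a : B → H) (b : B) : subst m a (gen b) = a b := by
  simp [gen]

theorem subst_one (m : G →* H) : subst m (fun _ : B => 1) = m.comp rightHom := by
  refine hom_ext (FreeGroup.ext_hom _ _ fun p => ?_) (MonoidHom.ext fun g => ?_) <;> simp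

theorem subst_inr_inl {B' : Type*} (w : B → FreeGroup (G × B')) (n : FreeGroup (G × B)) :
    subst inr (fun b => inl (w b)) (inl n) =
      (inl (FreeGroup.lift (fun p => translate G B' p.1 (w p.2)) n) : AdjoinFree G B') := by
  have : (subst inr (fun b => inl (w b))).comp inl =
      (inl : _ →* AdjoinFree G B').comp (FreeGroup.lift fun p => translate G B' p.1 (w p.2)) :=
    FreeGroup.ext_hom _ _ fun p => by simp [inl_aut]
  exact DFunLike.congr_fun this n

def under (G : GrpCat.{u}) (B : Type) : Under G :=
  Under.mk (GrpCat.ofHom (inr : G →* AdjoinFree G B))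

@[simp] theorem under_hom (G : GrpCat.{u}) (B : Type) : (under G B).hom.hom = inr := rfl

def underHom {G : GrpCat.{u}} {B : Type} (m : Under G) (a : B → m.right) : under G B ⟶ m :=
  Under.homMk (GrpCat.ofHom (subst m.hom.hom a)) (by ext g; simp [under])

end AdjoinFree

namespace CategoryTheory.NatTrans

open AdjoinFree

variable {G : GrpCat.{u}} (α : Under.forget G ⟶ Under.forget G)

theorem app_under_apply_eq_subst (m : Under G) (a : m.right) :
    (α.app m).hom a =
      subst m.hom.hom (fun _ => a) ((α.app (under G PUnit)).hom (gen PUnit.unit)) := by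
  have h := ConcreteCategory.congr_hom (α.naturality (underHom m fun _ => a)) (gen PUnit.unit)
  conv_lhs => rw [← subst_gen m.hom.hom (fun _ => a) PUnit.unit]
  exact h

theorem exists_app_under_gen_eq_inl :
    ∃ n, (α.app (under G PUnit)).hom (gen PUnit.unit) = inl n := by
  have h := α.app_under_apply_eq_subst (under G PUnit) 1
  rw [subst_one] at h
  exact ⟨_, SemidirectProduct.ext rfl
    (inr_injective ((h.symm.trans (map_one _)).trans (map_one inr).symm))⟩

theorem lift_eq_map_mul_map_of_app_under_gen_eq_inl {n : FreeGroup (G × PUnit)}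
    (hn : (α.app (under G PUnit)).hom (gen PUnit.unit) = inl n) :
    FreeGroup.lift (fun p => .of (p.1, true) * .of (p.1, false)) n =
      FreeGroup.map (fun p => (p.1, true)) n * FreeGroup.map (fun p => (p.1, false)) n := by
  have h : subst inr (fun _ => gen true * gen false) (inl n) =
      subst inr (fun _ => gen true) (inl n) * subst inr (fun _ => gen false) (inl n) := by
    have happ := α.app_under_apply_eq_subst (under G Bool)
    simp only [hn, under_hom] at happ
    exact (happ _).symm.trans
      (((α.app _).hom.map_mul _ _).trans (congrArg₂ (· * ·) (happ _) (happ _)))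
  simp only [gen, ← map_mul] at h
  rw [subst_inr_inl, subst_inr_inl, subst_inr_inl, ← map_mul, inl_inj] at h
  simpa [FreeGroup.map_eq_lift, Function.comp_def] using h

end CategoryTheory.NatTrans

namespace GrpCat

open AdjoinFree

variable {G : GrpCat.{u}}

def conjIso (g : G) : Under.forget G ≅ Under.forget G :=
  NatIso.ofComponents (fun m => (MulAut.conj (m.hom g)).toGrpIso) fun {m m'} f => by
    have hw : f.right (m.hom g) = m'.hom g := by rw [← Under.w f]; rfl
    refine GrpCat.ext fun (a : m.right) => ?_
    change m'.hom g * f.right a * (m'.hom g)⁻¹ = f.right (m.hom g * a * (m.hom g)⁻¹)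
    simp [hw]

def conjAut : G →* Aut (Under.forget G) where
  toFun := conjIso
  map_one' := by
    refine Aut.ext <| NatTrans.ext <| funext fun m => GrpCat.ext fun (a : m.right) => ?_
    change m.hom 1 * a * (m.hom 1)⁻¹ = a
    simp
  map_mul' g h := by
    refine Aut.ext <| NatTrans.ext <| funext fun m => GrpCat.ext fun (a : m.right) => ?_
    change m.hom (g * h) * a * (m.hom (g * h))⁻¹ =
      m.hom g * (m.hom h * a * (m.hom h)⁻¹) * (m.hom g)⁻¹
    simp [mul_assoc]

theorem conjAut_injective : Function.Injective (conjAut (G := G)) := by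
  rw [injective_iff_map_eq_one]
  intro g hg
  have h := congrArg (fun α : Aut (Under.forget G) =>
    α.hom.app (under G PUnit) (gen PUnit.unit)) hg
  change inr g * gen PUnit.unit * (inr g)⁻¹ = gen PUnit.unit at h
  rw [← map_inv, inr_mul_gen_mul_inr_inv, gen, inl_inj, FreeGroup.of_injective.eq_iff] at h
  exact (Prod.ext_iff.1 h).1

theorem conjAut_surjective : Function.Surjective (conjAut (G := G)) := by
  intro α
  obtain ⟨n, hn⟩ := α.hom.exists_app_under_gen_eq_inl
  have hinj (b : Bool) : Function.Injective fun p : G × PUnit => (p.1, b) :=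
    fun p q h => Prod.ext (Prod.ext_iff.1 h).1 (Subsingleton.elim _ _)
  rcases FreeGroup.eq_one_or_exists_eq_of_of_lift_eq_map_mul_map (hinj true) (hinj false)
      (by simp) (α.hom.lift_eq_map_mul_map_of_app_under_gen_eq_inl hn)
    with rfl | ⟨⟨g, _⟩, rfl⟩
  · refine absurd ((α.app (under G PUnit)).groupIsoToMulEquiv.injective ?_) (gen_ne_one ⟨⟩)
    exact hn.trans ((map_one inl).trans (map_one _).symm)
  · refine ⟨g, Aut.ext <| NatTrans.ext <| funext fun m => GrpCat.ext fun (a : m.right) => ?_⟩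
    change m.hom g * a * (m.hom g)⁻¹ = (α.hom.app m).hom a
    rw [α.hom.app_under_apply_eq_subst, hn, subst_inl_of]

end GrpCat

/-- The covariant isotropy group of a group `G` is isomorphic to `G` itself, via the
group isomorphism sending `g : G` to the extended inner automorphism whose component at an
object `m : G ⟶ H` of `Under G` is conjugation by `m g` on `H`. -/
theorem isotropy_of_group_eq_self (G : GrpCat) :
    ∃ e : G ≃* Aut (Under.forget G),
      ∀ (g : G) (m : Under G) (a : (m.right : GrpCat)),
        ((e g).hom.app m) a
          = (show (m.right : GrpCat) from m.hom g) * a * (show (m.right : GrpCat) from m.hom g)⁻¹ :=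
  ⟨MulEquiv.ofBijective GrpCat.conjAut ⟨GrpCat.conjAut_injective, GrpCat.conjAut_surjective⟩,
    fun _ _ _ => rfl⟩
end

section
/- For every monoid M, the covariant isotropy group of M in the category of monoids is isomorphic to the group Mˣ of invertible elements (units) of M: there is a group isomorphism between Aut(Under.forget M), the group of natural automorphisms of the coslice projection functor Under.forget M : Under M ⥤ MonCat, and Mˣ, sending a unit u ∈ Mˣ to the natural automorphism whose component at an object (m : M ⟶ N) of Under M is conjugation by the unit m(u) on N. -/
/-!
Adjoining a free indeterminate `X` to `M` gives an object `M → M ∗ ℕ` of `Under M` that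
corepresents `Under.forget M`. Hence, by naturality, an endomorphism `α` of `Under.forget M` is
determined by `w = α(X)`: it acts on `a : N` by substituting `a` for `X` in `w`. Substitution
multiplies `X`-degrees, so if `α` is invertible then `w` has degree one, i.e. `w = x X y` with
`x y ∈ M`, and `α` acts as `a ↦ x a y`. Since `α` preserves `1`, `x y = 1`; since it preserves
products in the left regular representation `M → Function.End M`, also `y x = 1`.
-/

open CategoryTheory

namespace Monoid.Coprod

variable {M N : Type*} [Monoid M] [Monoid N]

def indet : M ∗ Multiplicative ℕ := inr (Multiplicative.ofAdd 1)

def indetDegree : M ∗ Multiplicative ℕ →* Multiplicative ℕ := lift 1 (MonoidHom.id _)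

def evalIndet (f : M →* N) (b : N) : M ∗ Multiplicative ℕ →* N := lift f (powersHom N b)

@[simp] lemma indetDegree_inl (a : M) : indetDegree (inl a : M ∗ Multiplicative ℕ) = 1 := rfl

@[simp] lemma indetDegree_inr (n : Multiplicative ℕ) :
    indetDegree (inr n : M ∗ Multiplicative ℕ) = n := rfl

@[simp] lemma evalIndet_inl (f : M →* N) (b : N) (a : M) : evalIndet f b (inl a) = f a := rfl

@[simp] lemma evalIndet_indet (f : M →* N) (b : N) : evalIndet f b indet = b := by
  simp [evalIndet, indet]

lemma indetDegree_evalIndet_inl (w z : M ∗ Multiplicative ℕ) :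
    (indetDegree (evalIndet inl w z)).toAdd = (indetDegree z).toAdd * (indetDegree w).toAdd := by
  have hcomp : indetDegree.comp (evalIndet inl w) =
      (powersHom _ (indetDegree w)).comp indetDegree := by
    ext <;> simp [evalIndet]
  have h := DFunLike.congr_fun hcomp z
  simp only [MonoidHom.comp_apply, powersHom_apply] at h
  simp [h, mul_comm]

lemma exists_eq_inl_of_indetDegree_eq_zero {w : M ∗ Multiplicative ℕ}
    (hw : (indetDegree w).toAdd = 0) : ∃ x : M, w = inl x := by
  induction w using induction_on with
  | inl a => exact ⟨a, rfl⟩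
  | inr n => exact ⟨1, by simp_all⟩
  | mul w₁ w₂ ih₁ ih₂ =>
    simp only [map_mul, toAdd_mul, Nat.add_eq_zero_iff] at hw
    obtain ⟨⟨x₁, rfl⟩, ⟨x₂, rfl⟩⟩ := And.intro (ih₁ hw.1) (ih₂ hw.2)
    exact ⟨x₁ * x₂, by simp⟩

lemma exists_eq_inl_mul_indet_mul_inl {w : M ∗ Multiplicative ℕ}
    (hw : (indetDegree w).toAdd = 1) : ∃ x y : M, w = inl x * indet * inl y := by
  induction w using induction_on with
  | inl a => simp at hw
  | inr n =>
    rw [indetDegree_inr] at hw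
    exact ⟨1, 1, by simp [indet, ← hw]⟩
  | mul w₁ w₂ ih₁ ih₂ =>
    simp only [map_mul, toAdd_mul, Nat.add_eq_one_iff] at hw
    rcases hw with ⟨h₁, h₂⟩ | ⟨h₁, h₂⟩
    · obtain ⟨⟨x₁, rfl⟩, ⟨x₂, y₂, rfl⟩⟩ :=
        And.intro (exists_eq_inl_of_indetDegree_eq_zero h₁) (ih₂ h₂)
      exact ⟨x₁ * x₂, y₂, by simp [mul_assoc]⟩
    · obtain ⟨⟨x₁, y₁, rfl⟩, ⟨x₂, rfl⟩⟩ :=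
        And.intro (ih₁ h₁) (exists_eq_inl_of_indetDegree_eq_zero h₂)
      exact ⟨x₁, y₁ * x₂, by simp [mul_assoc]⟩

end Monoid.Coprod

namespace Units

variable {N : Type*} [Monoid N]

def conj (v : Nˣ) : N →* N where
  toFun a := v * a * ↑v⁻¹
  map_one' := by simp
  map_mul' a b := by simp [mul_assoc]

@[simp] lemma conj_apply (v : Nˣ) (a : N) : conj v a = v * a * ↑v⁻¹ := rfl

end Units

namespace MonCat

open Monoid.Coprod

universe u

variable (M : MonCat.{u})

def unitsConjEnd : Mˣ →* End (Under.forget M) where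
  toFun u :=
    { app m := ofHom (Units.conj (Units.map m.hom.hom u))
      naturality m m' f := by
        have hf (x : M) : f.right (m.hom x) = m'.hom x := ConcreteCategory.congr_hom (Under.w f) x
        ext (a : m.right)
        change Units.conj _ (f.right a) = f.right (Units.conj _ a)
        simp [hf] }
  map_one' := by
    apply NatTrans.ext
    ext m (a : m.right)
    change Units.conj (Units.map _ 1) a = a
    simp
  map_mul' u v := by
    apply NatTrans.ext
    ext m (a : m.right)
    change Units.conj (Units.map _ (u * v)) a =
      Units.conj (Units.map _ u) (Units.conj (Units.map _ v) a)
    simp [mul_assoc]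

def unitsConj : Mˣ →* Aut (Under.forget M) :=
  (Aut.unitsEndEquivAut _).toMonoidHom.comp (unitsConjEnd M).toHomUnits

lemma unitsConj_hom_app (u : Mˣ) (m : Under M) (a : m.right) :
    (unitsConj M u).hom.app m a = Units.conj (Units.map m.hom.hom u) a := rfl

def adjoinIndet : Under M := Under.mk (ofHom (inl : M →* M ∗ Multiplicative ℕ))

def adjoinIndetHom (m : Under M) (a : m.right) : adjoinIndet M ⟶ m :=
  Under.homMk (ofHom (evalIndet m.hom.hom a)) (by ext; simp [adjoinIndet])

lemma app_eq_evalIndet (α : Under.forget M ⟶ Under.forget M) (m : Under M) (a : m.right) :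
    α.app m a = evalIndet m.hom.hom a (α.app (adjoinIndet M) indet) := by
  have h := ConcreteCategory.congr_hom (α.naturality (adjoinIndetHom M m a)) indet
  change α.app m (evalIndet m.hom.hom a indet) =
    evalIndet m.hom.hom a (α.app (adjoinIndet M) indet) at h
  rwa [evalIndet_indet] at h

def leftRegular : Under M := Under.mk (ofHom (MulAction.toEndHom : M →* Function.End M))

lemma unitsConj_injective : Function.Injective (unitsConj M) := by
  intro u v huv
  -- conjugating the constant map `fun _ ↦ 1` by `(u * ·)` gives the constant map `fun _ ↦ u`
  have h := congr_fun (ConcreteCategory.congr_hom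
    (congr_arg (fun α : Aut (Under.forget M) => α.hom.app (leftRegular M)) huv)
    (Function.const M 1 : Function.End M)) 1
  change (u : M) * 1 = (v : M) * 1 at h
  simpa [Units.ext_iff] using h

lemma mul_eq_one_of_app_eq (α : Under.forget M ⟶ Under.forget M) (x y : M)
    (hα : ∀ (m : Under M) (a : m.right), α.app m a = m.hom x * a * m.hom y) :
    x * y = 1 ∧ y * x = 1 := by
  have hxy : (1 : M) = x * 1 * y := (map_one (α.app (Under.mk (𝟙 M))).hom).symm.trans (hα _ 1)
  rw [mul_one] at hxy
  refine ⟨hxy.symm, ?_⟩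
  let φ : Function.End M →* Function.End M := (α.app (leftRegular M)).hom
  have hφ (f : Function.End M) :
      φ f = MulAction.toEndHom x * f * MulAction.toEndHom y := hα (leftRegular M) f
  -- kept opaque so that `rw [hφ]` sees `c` as an element of `Function.End M`
  obtain ⟨c, hc⟩ : ∃ c : Function.End M, c = fun _ => 1 := ⟨_, rfl⟩
  have h := congr_fun (map_mul φ (MulAction.toEndHom y) c) 1
  rw [hφ, hφ, hφ] at h
  subst hc
  change x * (y * 1) = x * (y * (y * (x * 1))) at h
  rwa [mul_one, mul_one, ← mul_assoc, ← mul_assoc, ← hxy, one_mul, eq_comm] at h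

lemma unitsConj_surjective : Function.Surjective (unitsConj M) := by
  intro α
  set w := α.hom.app (adjoinIndet M) indet
  have hinv : evalIndet inl (α.inv.app (adjoinIndet M) indet) w = indet :=
    (app_eq_evalIndet M α.hom _ _).symm.trans
      (ConcreteCategory.congr_hom (α.inv_hom_id_app (adjoinIndet M)) indet)
  have hdeg : (indetDegree w).toAdd = 1 := by
    have h : (indetDegree w).toAdd * _ = 1 :=
      (indetDegree_evalIndet_inl _ _).symm.trans (congr_arg (fun z => (indetDegree z).toAdd) hinv)
    exact Nat.eq_one_of_mul_eq_one_right h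
  obtain ⟨x, y, hw⟩ := exists_eq_inl_mul_indet_mul_inl hdeg
  have hα (m : Under M) (a : m.right) : α.hom.app m a = m.hom x * a * m.hom y := by
    refine (app_eq_evalIndet M α.hom m a).trans ?_
    change evalIndet m.hom.hom a w = _
    simp [hw]
  obtain ⟨hxy, hyx⟩ := mul_eq_one_of_app_eq M α.hom x y hα
  refine ⟨⟨x, y, hxy, hyx⟩, ?_⟩
  ext m a
  exact (hα m a).symm

end MonCat

/-- The covariant isotropy group of a monoid `M` is isomorphic to the group `Mˣ` of units of
`M`, via the group isomorphism sending a unit `u : Mˣ` to the extended inner automorphism whose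
component at an object `m : M ⟶ N` of `Under M` is conjugation by the unit `m u` on `N`. -/
theorem isotropy_of_monoid_eq_units (M : MonCat) :
    ∃ e : (M : Type _)ˣ ≃* Aut (Under.forget M),
      ∀ (u : (M : Type _)ˣ) (m : Under M) (a : (m.right : MonCat)),
        ((e u).hom.app m) a
          = ((Units.map (show (M : Type _) →* (m.right : MonCat) from m.hom.hom) u : (m.right : MonCat)ˣ) : (m.right : MonCat))
              * a *
            (((Units.map (show (M : Type _) →* (m.right : MonCat) from m.hom.hom) u)⁻¹ : (m.right : MonCat)ˣ) : (m.right : MonCat)) :=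
  ⟨.ofBijective (MonCat.unitsConj M) ⟨MonCat.unitsConj_injective M, MonCat.unitsConj_surjective M⟩,
    MonCat.unitsConj_hom_app M⟩
end

section
/- For every commutative monoid M, the covariant isotropy group of M in the category of commutative monoids is trivial: every natural automorphism of the coslice projection functor Under.forget M : Under M ⥤ CommMonCat is equal to the identity natural transformation. -/
/-!
`M × ℕ` (written multiplicatively) is the free commutative monoid under `M` on one generator `t`.
Naturality against the maps `t ↦ a` shows that a natural endomorphism `τ` of `Under.forget M`
with `τ t = (m, t ^ k)` acts by `a ↦ m * a ^ k` everywhere, and `τ 1 = 1` forces `m = 1`.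
So `τ` is a power map `a ↦ a ^ k`; if it has a one-sided inverse `a ↦ a ^ l`, then
`t ^ (k * l) = t`, whence `k = 1`.
-/

open CategoryTheory

universe u

namespace CommMonCat

variable (M : CommMonCat.{u})

abbrev AdjoinGen : Type u := M × ULift.{u} (Multiplicative ℕ)

def underAdjoinGen : Under M :=
  Under.mk (ofHom (MonoidHom.inl M (ULift.{u} (Multiplicative ℕ))) : M ⟶ of (AdjoinGen M))

def adjoinGen : AdjoinGen M := (1, ULift.up (Multiplicative.ofAdd 1))

variable {M}

lemma adjoinGen_pow (n : ℕ) : adjoinGen M ^ n = (1, ULift.up (Multiplicative.ofAdd n)) := by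
  ext
  · simp [adjoinGen]
  · simp [adjoinGen, ← ofAdd_nsmul]

lemma adjoinGen_pow_injective : Function.Injective (adjoinGen M ^ · : ℕ → AdjoinGen M) := by
  intro m n h
  simpa [adjoinGen_pow] using h

def underAdjoinGenLift (X : Under M) (a : X.right) : underAdjoinGen M ⟶ X :=
  Under.homMk (ofHom (X.hom.hom.coprod ((powersHom X.right a).comp MulEquiv.ulift.toMonoidHom)))
    (by ext m; simp [underAdjoinGen])

@[simp]
lemma underAdjoinGenLift_apply (X : Under M) (a : X.right) (p : AdjoinGen M) :
    (underAdjoinGenLift X a).right.hom p = X.hom.hom p.1 * a ^ (Multiplicative.toAdd p.2.down) :=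
  rfl

lemma underAdjoinGenLift_adjoinGen (X : Under M) (a : X.right) :
    (underAdjoinGenLift X a).right.hom (adjoinGen M) = a := by
  simp [adjoinGen]

lemma forget_natTrans_app_eq_mul_pow (τ : Under.forget M ⟶ Under.forget M) (X : Under M)
    (a : X.right) :
    (τ.app X).hom a = X.hom.hom ((τ.app (underAdjoinGen M)).hom (adjoinGen M)).1 *
      a ^ Multiplicative.toAdd ((τ.app (underAdjoinGen M)).hom (adjoinGen M)).2.down := by
  conv_lhs => rw [← underAdjoinGenLift_adjoinGen X a]
  exact (ConcreteCategory.congr_hom (τ.naturality _) _).trans (underAdjoinGenLift_apply X a _)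

lemma forget_natTrans_app_adjoinGen_fst (τ : Under.forget M ⟶ Under.forget M) :
    ((τ.app (underAdjoinGen M)).hom (adjoinGen M)).1 = 1 := by
  have h : (((τ.app (underAdjoinGen M)).hom (adjoinGen M)).1, 1) * (1 : AdjoinGen M) ^ _ = 1 :=
    (forget_natTrans_app_eq_mul_pow τ (underAdjoinGen M) 1).symm.trans (map_one _)
  simpa using congrArg Prod.fst h

lemma forget_natTrans_exists_pow (τ : Under.forget M ⟶ Under.forget M) :
    ∃ k : ℕ, ∀ (X : Under M) (a : X.right), (τ.app X).hom a = a ^ k :=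
  ⟨_, fun X a => by
    rw [forget_natTrans_app_eq_mul_pow, forget_natTrans_app_adjoinGen_fst, map_one, one_mul]⟩

lemma forget_natTrans_eq_id_of_comp_eq_id {τ σ : Under.forget M ⟶ Under.forget M}
    (h : τ ≫ σ = 𝟙 _) : τ = 𝟙 _ := by
  obtain ⟨k, hk⟩ := forget_natTrans_exists_pow τ
  obtain ⟨l, hl⟩ := forget_natTrans_exists_pow σ
  have hkl : k * l = 1 := by
    apply adjoinGen_pow_injective (M := M)
    have hgen : (σ.app (underAdjoinGen M)).hom
        ((τ.app (underAdjoinGen M)).hom (adjoinGen M)) = adjoinGen M :=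
      congrArg (fun f => f.hom (adjoinGen M)) (NatTrans.congr_app h (underAdjoinGen M))
    -- not `rw [hk, hl] at hgen`: the carrier `(Under.forget M).obj _` is only
    -- semireducibly equal to `AdjoinGen M`
    have hpow : (adjoinGen M ^ k) ^ l = adjoinGen M :=
      (hl _ _).symm.trans ((congrArg _ (hk _ _)).symm.trans hgen)
    exact (pow_mul _ _ _).trans (hpow.trans (pow_one _).symm)
  ext X a
  exact (hk X a).trans (by rw [Nat.eq_one_of_mul_eq_one_right hkl]; exact pow_one a)

end CommMonCat

/-- The covariant isotropy group of any commutative monoid is trivial: every natural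
automorphism of the coslice projection functor `Under.forget M : Under M ⥤ CommMonCat`
is the identity. -/
theorem isotropy_of_commMonoid_trivial (M : CommMonCat) (α : Aut (Under.forget M)) :
    α.hom = 𝟙 (Under.forget M) :=
  CommMonCat.forget_natTrans_eq_id_of_comp_eq_id α.hom_inv_id
end

section
/- (Garner) The category Cat of small categories has trivial covariant isotropy: for every small category 𝒞 (object of Cat), every natural automorphism of the coslice projection functor Under.forget 𝒞 : Under 𝒞 ⥤ Cat is equal to the identity natural transformation. -/
/-!
Test against `C ⊕ [1]`, an object of `Under C` via `inl`, where `[1]` is the walking arrow. An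
arrow `f` of `X.right` for `X : Under C` is the image of `[1]` under the map `C ⊕ [1] ⟶ X` that is
`X.hom` on `C` and picks out `f` on `[1]`, so by naturality it suffices that the component `θ` of
the automorphism at `C ⊕ [1]` fixes `[1]`. Naturality along `inl : C ⟶ C ⊕ [1]`, for the
automorphism and its inverse, shows that `θ` maps objects of `[1]` into `[1]`; naturality along the
endomorphism of `C ⊕ [1]` collapsing `[1]` onto one of its objects then shows that `θ` fixes that
object, and the arrow is fixed because `[1]` is thin.
-/

open CategoryTheory

universe v u

namespace CategoryTheory

/-- `Fin 2` as a category with objects in `Type u` and morphisms in `Type v`, so that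
`C ⊕ WalkingArrow` lies in the same `Cat.{v, u}` as `C`. -/
def WalkingArrow : Type u := ULiftHom.{v} (ULift.{u} (Fin 2))

namespace WalkingArrow

instance : Category.{v} WalkingArrow.{v, u} :=
  @ULiftHom.category _ (uliftCategory (Fin 2))

instance (a b : WalkingArrow.{v, u}) : Subsingleton (a ⟶ b) :=
  inferInstanceAs (Subsingleton (ULift _))

def equiv : Fin 2 ≌ WalkingArrow.{v, u} := ULiftHomULiftCategory.equiv (Fin 2)

def zero : WalkingArrow.{v, u} := equiv.functor.obj 0

def one : WalkingArrow.{v, u} := equiv.functor.obj 1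

def hom : zero.{v, u} ⟶ one := equiv.functor.map (homOfLE (by decide))

variable {D : Type*} [Category D]

def functor {d₁ d₂ : D} (f : d₁ ⟶ d₂) : WalkingArrow.{v, u} ⥤ D :=
  equiv.inverse ⋙ ComposableArrows.mk₁ f

theorem eq_id_of_functor_comp_eq (F : D ⥤ D)
    (hF : ∀ {d₁ d₂ : D} (f : d₁ ⟶ d₂), functor.{v, u} f ⋙ F = functor f) : F = 𝟭 D :=
  Functor.ext (fun d => Functor.congr_obj (hF (𝟙 d)) zero) fun _ _ f =>
    Functor.congr_hom (hF f) hom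

end WalkingArrow

theorem Functor.eq_comp_inr_of_obj_eq {C W V : Type*} [Category C] [Category W] [Category V]
    [Quiver.IsThin W] (F : V ⥤ C ⊕ W) (G : V ⥤ W) (h : ∀ x, F.obj x = .inr (G.obj x)) :
    F = G ⋙ Sum.inr_ C W :=
  Functor.ext h fun x y _ => by
    have : Subsingleton (F.obj x ⟶ F.obj y) := by
      rw [h x, h y]
      exact inferInstanceAs (Subsingleton (ULift _))
    exact Subsingleton.elim _ _

namespace Cat

variable (C : Cat.{v, u}) (W : Type u) [Category.{v} W]

def underInl : Under C := Under.mk (Sum.inl_ C W).toCatHom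

variable {C W}

def underInlDesc (X : Under C) (G : W ⥤ X.right) : underInl C W ⟶ X :=
  Under.homMk (X.hom.toFunctor.sum' G).toCatHom rfl

section NatEndo

variable (α : Under.forget C ⟶ Under.forget C)

theorem sum'_comp_app (X : Under C) (G : W ⥤ X.right) :
    X.hom.toFunctor.sum' G ⋙ (α.app X).toFunctor =
      (α.app (underInl C W)).toFunctor ⋙ X.hom.toFunctor.sum' G :=
  congrArg Hom.toFunctor (α.naturality (underInlDesc X G))

theorem app_underInl_obj_inl (c : C) :
    (α.app (underInl C W)).toFunctor.obj (.inl c) =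
      .inl ((α.app (Under.mk (𝟙 C))).toFunctor.obj c) :=
  Functor.congr_obj (congrArg Hom.toFunctor
    (α.naturality (Under.homMk (Sum.inl_ C W).toCatHom rfl : Under.mk (𝟙 C) ⟶ underInl C W))) c

theorem app_underInl_obj_inr_of_eq_inr {w w' : W}
    (h : (α.app (underInl C W)).toFunctor.obj (.inr w) = .inr w') :
    (α.app (underInl C W)).toFunctor.obj (.inr w) = .inr w := by
  let collapse := (Sum.inl_ C W).sum' ((Functor.const W).obj (.inr w))
  exact (Functor.congr_obj (sum'_comp_app α (underInl C W) ((Functor.const W).obj (.inr w)))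
    (.inr w)).trans (congrArg collapse.obj h)

end NatEndo

variable (α : Aut (Under.forget C))

theorem app_underInl_obj_inr (w : W) :
    (α.hom.app (underInl C W)).toFunctor.obj (.inr w) = .inr w := by
  rcases h : (α.hom.app (underInl C W)).toFunctor.obj (.inr w) with c | w'
  · have hinv : (α.inv.app (underInl C W)).toFunctor.obj (.inl c) = .inr w := by
      rw [← h]
      exact Functor.congr_obj (congrArg Hom.toFunctor (α.hom_inv_id_app (underInl C W))) (.inr w)
    cases hinv.symm.trans (app_underInl_obj_inl α.inv c)
  · rw [← h]
    exact app_underInl_obj_inr_of_eq_inr α.hom h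

variable [Quiver.IsThin W]

theorem inr_comp_app_underInl :
    Sum.inr_ C W ⋙ (α.hom.app (underInl C W)).toFunctor = 𝟭 W ⋙ Sum.inr_ C W :=
  Functor.eq_comp_inr_of_obj_eq _ (𝟭 W) (app_underInl_obj_inr α)

theorem comp_hom_app_eq_self (X : Under C) (G : W ⥤ X.right) :
    G ⋙ (α.hom.app X).toFunctor = G :=
  (congrArg (Sum.inr_ C W ⋙ ·) (sum'_comp_app α.hom X G)).trans
    (congrArg (· ⋙ X.hom.toFunctor.sum' G) (inr_comp_app_underInl α))

end Cat

end CategoryTheory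

/-- (Garner) The category `Cat` of small categories has trivial covariant isotropy: for every
small category `C`, every natural automorphism of the coslice projection functor
`Under.forget C : Under C ⥤ Cat` is the identity. -/
theorem isotropy_of_cat_trivial (C : Cat) (α : Aut (Under.forget C)) :
    α.hom = 𝟙 (Under.forget C) := by
  ext X : 2
  exact Cat.Hom.ext <| WalkingArrow.eq_id_of_functor_comp_eq _ fun f =>
    Cat.comp_hom_app_eq_self α X (WalkingArrow.functor f)
end

section
/- (Garner) The category Grpd of small groupoids has trivial covariant isotropy: for every small groupoid G (object of Grpd), every natural automorphism of the coslice projection functor Under.forget G : Under G ⥤ Grpd is equal to the identity natural transformation. -/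
/-!
Let `α` be a natural automorphism of `Under.forget G` and `u : G ⟶ H` an object of `Under G`.
Adjoin to `H` a disjoint codiscrete groupoid on a set `A`, giving `G ⟶ H ⊕ A`. Naturality of `α⁻¹`
along the inclusion `H ⟶ H ⊕ A` shows that the component of `α` at `H ⊕ A` cannot move a point of
`A` into `H`; naturality along the retraction collapsing `A` onto a point `x` of `H` then gives
`α_H x = x`. So every component fixes objects, hence fixes `A` pointwise inside `H ⊕ A`, and since
the hom-sets of `A` are singletons it is the identity on `A`. Naturality along the retraction
`H ⊕ A ⟶ H` given by an arbitrary `F : A ⥤ H` yields `F ⋙ α_H = F`; choosing for `F` the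
functor that picks out an arrow `f` of `H` shows that `α_H` fixes `f`.
-/

open CategoryTheory

universe v₁ v₂ u₁ u₂ v u

namespace CategoryTheory

instance Sum.groupoid (C : Type u₁) (D : Type u₂) [Groupoid.{v₁} C] [Groupoid.{v₂} D] :
    Groupoid.{max v₁ v₂} (C ⊕ D) where
  inv f := Sum.homInduction (P := fun {x y} _ => y ⟶ x)
    (fun _ _ f => (Sum.inl_ C D).map (Groupoid.inv f))
    (fun _ _ f => (Sum.inr_ C D).map (Groupoid.inv f)) f
  inv_comp f := by induction f using Sum.homInduction <;> simp
  comp_inv f := by induction f using Sum.homInduction <;> simp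

theorem Functor.ext_of_subsingleton_hom {C D : Type*} [Category C] [Category D] {F G : C ⥤ D}
    [hG : ∀ X Y, Subsingleton (G.obj X ⟶ G.obj Y)] (h_obj : ∀ X, F.obj X = G.obj X) : F = G :=
  Functor.ext h_obj fun X Y _ => by
    have : Subsingleton (F.obj X ⟶ F.obj Y) := by rw [h_obj X, h_obj Y]; infer_instance
    exact Subsingleton.elim _ _

namespace Codiscrete

instance (A : Type u) : Groupoid (Codiscrete A) :=
  Groupoid.ofHomUnique fun {_ _} => inferInstance

def lift {A : Type*} {E : Type*} [Groupoid E] (o : A → E) (x : E) (φ : ∀ a, x ⟶ o a) :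
    Codiscrete A ⥤ E where
  obj a := o a.as
  map {a b} _ := Groupoid.inv (φ a.as) ≫ φ b.as

end Codiscrete

theorem Functor.eq_id_of_forall_codiscrete_comp_eq {E : Type u} [Groupoid.{v} E] (Φ : E ⥤ E)
    (h : ∀ F : Codiscrete (ULift.{u} Bool) ⥤ E, F ⋙ Φ = F) : Φ = 𝟭 E :=
  Functor.ext (fun x => Functor.congr_obj (h ((Functor.const _).obj x)) ⟨⟨false⟩⟩) fun x y f => by
    let F : Codiscrete (ULift.{u} Bool) ⥤ E :=
      Codiscrete.lift (fun b => cond b.down y x) x fun | ⟨false⟩ => 𝟙 x | ⟨true⟩ => f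
    have hF : F.map (X := ⟨⟨false⟩⟩) (Y := ⟨⟨true⟩⟩) ⟨⟩ = f := by
      simp [F, Codiscrete.lift, Groupoid.inv_eq_inv]
    have hΦF := Functor.congr_hom (h F) (X := ⟨⟨false⟩⟩) (Y := ⟨⟨true⟩⟩) ⟨⟩
    rw [Functor.comp_map, hF] at hΦF
    exact hΦF

theorem Iso.eq_map_obj_of_hom_app_obj_eq_map_obj {C : Type*} [Category C]
    {F F' : C ⥤ Grpd.{v, u}} (α : F ≅ F') {c d : C} (j : c ⟶ d) {x : F'.obj c} {y : F.obj d}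
    (h : (α.hom.app d).obj y = (F'.map j).obj x) :
    y = (F.map j).obj ((α.inv.app c).obj x) := by
  have hinv := Functor.congr_obj (α.inv.naturality j) x
  have hid := Functor.congr_obj (α.hom_inv_id_app d) y
  simp only [Grpd.comp_eq_comp, Grpd.id_eq_id, Functor.comp_obj, Functor.id_obj] at hinv hid
  rw [← hid, h, hinv]

namespace Grpd

variable {G : Grpd.{v, u}}

def underSumCodiscrete (u : Under G) (A : Type u) : Under G :=
  Under.mk (u.hom ≫ show u.right ⟶ Grpd.of (u.right ⊕ Codiscrete A) from Sum.inl_ _ _)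

def underSumCodiscreteInl (u : Under G) (A : Type u) : u ⟶ underSumCodiscrete u A :=
  Under.homMk (show u.right ⟶ Grpd.of (u.right ⊕ Codiscrete A) from Sum.inl_ _ _)

def underSumCodiscreteDesc (u : Under G) {A : Type u} (F : Codiscrete A ⥤ u.right) :
    underSumCodiscrete u A ⟶ u :=
  Under.homMk (show Grpd.of (u.right ⊕ Codiscrete A) ⟶ u.right from (𝟭 _).sum' F)

variable (α : Aut (Under.forget G))

theorem isotropy_naturality {u w : Under G} (f : u ⟶ w) :
    f.right ⋙ α.hom.app w = α.hom.app u ⋙ f.right :=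
  α.hom.naturality f

theorem exists_isotropy_app_obj_inr_eq_inr (u : Under G) (A : Type u) (a : Codiscrete A) :
    ∃ a' : Codiscrete A, (α.hom.app (underSumCodiscrete u A)).obj
      (Sum.inr a : u.right ⊕ Codiscrete A) = Sum.inr a' := by
  cases h : ((α.hom.app (underSumCodiscrete u A)).obj (Sum.inr a : u.right ⊕ Codiscrete A) :
      u.right ⊕ Codiscrete A) with
  | inl x => cases Iso.eq_map_obj_of_hom_app_obj_eq_map_obj α (underSumCodiscreteInl u A) h
  | inr a' => exact ⟨a', rfl⟩

theorem isotropy_app_obj (u : Under G) (x : u.right) : (α.hom.app u).obj x = x := by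
  let r := underSumCodiscreteDesc u ((Functor.const (Codiscrete PUnit)).obj x)
  obtain ⟨a, ha⟩ := exists_isotropy_app_obj_inr_eq_inr α u PUnit ⟨⟨⟩⟩
  exact (Functor.congr_obj (isotropy_naturality α r) (Sum.inr ⟨⟨⟩⟩)).trans
    (congrArg r.right.obj ha)

theorem inr_comp_isotropy_app (u : Under G) (A : Type u) :
    (show Codiscrete A ⥤ (underSumCodiscrete u A).right from Sum.inr_ _ _) ⋙
      α.hom.app (underSumCodiscrete u A) = Sum.inr_ _ _ :=
  Functor.ext_of_subsingleton_hom (hG := fun _ _ => inferInstanceAs (Subsingleton (ULift _)))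
    fun a => isotropy_app_obj α (underSumCodiscrete u A) (Sum.inr a)

theorem comp_isotropy_app (u : Under G) {A : Type u} (F : Codiscrete A ⥤ u.right) :
    F ⋙ α.hom.app u = F :=
  let r := underSumCodiscreteDesc u F
  (congrArg (Sum.inr_ _ _ ⋙ ·) (isotropy_naturality α r)).trans
    (congrArg (· ⋙ r.right) (inr_comp_isotropy_app α u A))

end Grpd

end CategoryTheory

/-- (Garner) The category `Grpd` of small groupoids has trivial covariant isotropy: for every
small groupoid `G`, every natural automorphism of the coslice projection functor
`Under.forget G : Under G ⥤ Grpd` is the identity. -/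
theorem isotropy_of_grpd_trivial (G : Grpd) (α : Aut (Under.forget G)) :
    α.hom = 𝟙 (Under.forget G) :=
  NatTrans.ext (funext fun u =>
    Functor.eq_id_of_forall_codiscrete_comp_eq _ (Grpd.comp_isotropy_app α u))
end

section
/- (Main theorem) For every monoid object C in Cat (i.e., every small strict monoidal category), the covariant isotropy group of C in the category Mon_ Cat of monoid objects in Cat is isomorphic to the Picard group of C: there is a group isomorphism between Aut(Under.forget C), the group of natural automorphisms of the coslice projection functor Under.forget C : Under C ⥤ Mon_ Cat, and the group (Ob C)ˣ of units of the object monoid of C. -/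
open CategoryTheory MonoidalCategory

universe v u

/-- The object monoid of a monoid object in `Cat` (i.e. of a small strict monoidal category):
its carrier is the set of objects of the underlying category `C.X`, multiplication is given by
the tensor product (the multiplication morphism `C.mul`) and the unit is the tensor unit object
(picked out by `C.one`). -/
def Ob (C : Mon Cat.{v, u}) : Type u := C.X

instance obMonoid (C : Mon Cat.{v, u}) : Monoid (Ob C) where
  mul a b := C.mon.mul.toFunctor.obj (a, b)
  one := C.mon.one.toFunctor.obj ⟨⟨⟨⟩⟩⟩
  one_mul a := Functor.congr_obj (congrArg Cat.Hom.toFunctor (MonObj.one_mul C.X)) (⟨⟨⟨⟩⟩⟩, a)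
  mul_one a := Functor.congr_obj (congrArg Cat.Hom.toFunctor (MonObj.mul_one C.X)) (a, ⟨⟨⟨⟩⟩⟩)
  mul_assoc a b c := (Functor.congr_obj (congrArg Cat.Hom.toFunctor (MonObj.mul_assoc C.X)) ((a, b), c)).trans rfl

/-!
Conjugation by an invertible object `u` of `C`, acting on each `f : C ⟶ M` by
`m ↦ f u ⊗ m ⊗ f u⁻¹`, is a natural automorphism of `Under.forget C`, and `u ↦ conj u` is a group
homomorphism. For the converse, adjoin to `C` a generic arrow `x₀ ⟶ x₁`: the free extension
`FreeExt C (Fin 2)` has as objects the words `a₀ x_{i₁} a₁ ⋯ x_{iₙ} aₙ`. By naturality, an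
automorphism `α` is determined by the word `w = α(x₀)`: it sends any object `m` of any `f : C ⟶ M`
to `w` with `f` applied to its letters from `C` and `m` substituted for the generic letters.
Invertibility of `α` rules out the empty word, and `α(x₀ ⊗ x₁) = α(x₀) ⊗ α(x₁)` forces exactly one
generic letter, `w = u x c`, with `c ⊗ u = 1`; evaluating at `f = 𝟙 C` gives `u ⊗ c = 1`. So `α`
agrees with `conj u` on objects, and an automorphism fixing all objects also fixes all arrows, as
one sees by applying naturality to the generic arrow. Finally `conj u` sends `x₀` to `u x₀ u⁻¹`,
which equals `x₀` only if `u = 1`.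
-/

namespace StrictMonCat

section Arrows

variable {A B : Type*} [Category A] [Category B]

theorem exists_arrow_mk_eq {a b a' b' : A} (f : a ⟶ b) (ha : a = a') (hb : b = b') :
    ∃ g : a' ⟶ b', Arrow.mk f = Arrow.mk g := by
  subst ha hb
  exact ⟨f, rfl⟩

theorem arrow_mk_prod_eq_iff {x y x' y' : A × B} (f : x ⟶ y) (f' : x' ⟶ y') :
    Arrow.mk f = Arrow.mk f' ↔ Arrow.mk f.1 = Arrow.mk f'.1 ∧ Arrow.mk f.2 = Arrow.mk f'.2 := by
  refine ⟨fun h => ⟨congrArg (CategoryTheory.Prod.fst A B).mapArrow.obj h,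
    congrArg (CategoryTheory.Prod.snd A B).mapArrow.obj h⟩, fun ⟨h₁, h₂⟩ => ?_⟩
  obtain ⟨_, _⟩ := x
  obtain ⟨_, _⟩ := y
  obtain ⟨_, _⟩ := x'
  obtain ⟨_, _⟩ := y'
  obtain ⟨f₁, f₂⟩ := f
  obtain ⟨f₁', f₂'⟩ := f'
  cases h₁
  cases h₂
  rfl

theorem arrow_mk_map_eq_of_eq {D E : Cat.{v, u}} {F G : D ⟶ E} (h : F = G) {a b : D}
    (f : a ⟶ b) : Arrow.mk (F.toFunctor.map f) = Arrow.mk (G.toFunctor.map f) := by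
  subst h
  rfl

end Arrows

/- `Ob M` is a plain definition, invisible to instance search, so the object monoid is also
registered on the carrier `M.X` itself. -/
instance objMonoid (M : Mon Cat.{v, u}) : Monoid M.X := obMonoid M

def mulMap {M : Mon Cat.{v, u}} {a b c d : M.X} (f : a ⟶ b) (g : c ⟶ d) : a * c ⟶ b * d :=
  M.mon.mul.toFunctor.map (f, g)

local infixl:70 " ⊙ " => mulMap

section MonObj

/- Morphisms of `M.X`, regarded as objects of `Arrow M.X`, form a monoid under `⊙`. Equalities
between morphisms whose endpoints agree only propositionally are stated in this monoid. -/
instance arrowMonoid (M : Mon Cat.{v, u}) : Monoid (Arrow M.X) where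
  mul A B := Arrow.mk (A.hom ⊙ B.hom)
  one := Arrow.mk (𝟙 1)
  mul_assoc A B C := arrow_mk_map_eq_of_eq (MonObj.mul_assoc M.X)
    (a := ((A.left, B.left), C.left)) (b := ((A.right, B.right), C.right)) ((A.hom, B.hom), C.hom)
  one_mul A := by
    have h := arrow_mk_map_eq_of_eq (MonObj.one_mul M.X)
      (a := (⟨⟨⟨⟩⟩⟩, A.left)) (b := (⟨⟨⟨⟩⟩⟩, A.right)) (𝟙 _, A.hom)
    rw [← Arrow.mk_eq A]
    exact (congrArg (fun g => Arrow.mk (g ⊙ A.hom)) (M.mon.one.toFunctor.map_id _).symm).trans h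
  mul_one A := by
    have h := arrow_mk_map_eq_of_eq (MonObj.mul_one M.X)
      (a := (A.left, ⟨⟨⟨⟩⟩⟩)) (b := (A.right, ⟨⟨⟨⟩⟩⟩)) (A.hom, 𝟙 _)
    rw [← Arrow.mk_eq A]
    exact (congrArg (fun g => Arrow.mk (A.hom ⊙ g)) (M.mon.one.toFunctor.map_id _).symm).trans h

variable {M N : Mon Cat.{v, u}}

theorem arrow_mk_mulMap {a b c d : M.X} (f : a ⟶ b) (g : c ⟶ d) :
    Arrow.mk (f ⊙ g) = Arrow.mk f * Arrow.mk g := rfl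

theorem arrow_mk_id_one : Arrow.mk (𝟙 (1 : M.X)) = 1 := rfl

theorem id_mulMap_id (a b : M.X) : 𝟙 a ⊙ 𝟙 b = 𝟙 (a * b) :=
  M.mon.mul.toFunctor.map_id (a, b)

theorem comp_mulMap_comp {a b c a' b' c' : M.X} (f : a ⟶ b) (g : b ⟶ c) (f' : a' ⟶ b')
    (g' : b' ⟶ c') : (f ≫ g) ⊙ (f' ≫ g') = (f ⊙ f') ≫ (g ⊙ g') :=
  M.mon.mul.toFunctor.map_comp (X := (a, a')) (Y := (b, b')) (Z := (c, c')) (f, f') (g, g')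

def idArrow (M : Mon Cat.{v, u}) : M.X →* Arrow M.X where
  toFun a := Arrow.mk (𝟙 a)
  map_one' := rfl
  map_mul' a b := congrArg Arrow.mk (id_mulMap_id a b).symm

theorem obj_mul (f : M ⟶ N) (a b : M.X) :
    f.hom.toFunctor.obj (a * b) = f.hom.toFunctor.obj a * f.hom.toFunctor.obj b :=
  Functor.congr_obj (congrArg Cat.Hom.toFunctor (IsMonHom.mul_hom f.hom)) (a, b)

theorem obj_one (f : M ⟶ N) : f.hom.toFunctor.obj 1 = 1 :=
  Functor.congr_obj (congrArg Cat.Hom.toFunctor (IsMonHom.one_hom f.hom)) ⟨⟨⟨⟩⟩⟩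

def objHom (f : M ⟶ N) : M.X →* N.X where
  toFun := f.hom.toFunctor.obj
  map_one' := obj_one f
  map_mul' := obj_mul f

theorem arrow_mk_map_mulMap (f : M ⟶ N) {a b c d : M.X} (φ : a ⟶ b) (ψ : c ⟶ d) :
    Arrow.mk (f.hom.toFunctor.map (φ ⊙ ψ)) =
      Arrow.mk (f.hom.toFunctor.map φ) * Arrow.mk (f.hom.toFunctor.map ψ) :=
  arrow_mk_map_eq_of_eq (IsMonHom.mul_hom f.hom) (a := (a, c)) (b := (b, d)) (φ, ψ)

def arrowHom (f : M ⟶ N) : Arrow M.X →* Arrow N.X where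
  toFun := f.hom.toFunctor.mapArrow.obj
  map_one' := by
    change Arrow.mk (f.hom.toFunctor.map (𝟙 1)) = Arrow.mk (𝟙 1)
    rw [f.hom.toFunctor.map_id, obj_one]
  map_mul' A B := arrow_mk_map_mulMap f A.hom B.hom

theorem arrowHom_arrow_mk (f : M ⟶ N) {a b : M.X} (φ : a ⟶ b) :
    arrowHom f (Arrow.mk φ) = Arrow.mk (f.hom.toFunctor.map φ) := rfl

theorem arrowHom_idArrow (f : M ⟶ N) (a : M.X) :
    arrowHom f (idArrow M a) = idArrow N (objHom f a) :=
  congrArg Arrow.mk (f.hom.toFunctor.map_id a)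

theorem hom_ext_of_functor_eq {f g : M ⟶ N} (h : f.hom.toFunctor = g.hom.toFunctor) : f = g :=
  Mon.Hom.ext (Cat.Hom.ext h)

theorem cat_hom_ext_of_unit {D : Cat.{v, u}} {F G : 𝟙_ Cat.{v, u} ⟶ D}
    (h : F.toFunctor.obj ⟨⟨⟨⟩⟩⟩ = G.toFunctor.obj ⟨⟨⟨⟩⟩⟩) : F = G := by
  refine Cat.Hom.ext (Arrow.functor_ext fun X Y f => ?_)
  obtain rfl : X = ⟨⟨⟨⟩⟩⟩ := rfl
  obtain rfl : Y = ⟨⟨⟨⟩⟩⟩ := rfl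
  obtain rfl : f = 𝟙 _ := rfl
  change Arrow.mk (F.toFunctor.map (𝟙 _)) = Arrow.mk (G.toFunctor.map (𝟙 _))
  rw [F.toFunctor.map_id, G.toFunctor.map_id]
  exact congrArg (fun x => Arrow.mk (𝟙 x)) h

def homMk (F : M.X ⥤ N.X) (map_one : F.obj 1 = 1)
    (map_mul : ∀ {a b c d : M.X} (f : a ⟶ b) (g : c ⟶ d),
      Arrow.mk (F.map (f ⊙ g)) = Arrow.mk (F.map f) * Arrow.mk (F.map g)) : M ⟶ N where
  hom := F.toCatHom
  isMonHom_hom :=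
    { one_hom := cat_hom_ext_of_unit map_one
      mul_hom := Cat.Hom.ext (Arrow.functor_ext fun _ _ f => map_mul f.1 f.2) }

def ofTensor (A : Type u) [Category.{v} A] (T : A × A ⥤ A) (e : A)
    (assoc : ∀ {a b c a' b' c' : A} (f : a ⟶ a') (g : b ⟶ b') (k : c ⟶ c'),
      Arrow.mk (T.map ((T.map ((f, g) : (a, b) ⟶ (a', b')), k) :
          (T.obj (a, b), c) ⟶ (T.obj (a', b'), c'))) =
        Arrow.mk (T.map ((f, T.map ((g, k) : (b, c) ⟶ (b', c'))) :
          (a, T.obj (b, c)) ⟶ (a', T.obj (b', c')))))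
    (one_mul : ∀ {a b : A} (f : a ⟶ b),
      Arrow.mk (T.map ((𝟙 e, f) : (e, a) ⟶ (e, b))) = Arrow.mk f)
    (mul_one : ∀ {a b : A} (f : a ⟶ b),
      Arrow.mk (T.map ((f, 𝟙 e) : (a, e) ⟶ (b, e))) = Arrow.mk f) :
    Mon Cat.{v, u} where
  X := Cat.of A
  mon :=
    { one := ((Functor.const (𝟙_ Cat.{v, u} : Cat.{v, u})).obj e).toCatHom
      mul := T.toCatHom
      one_mul := Cat.Hom.ext (Arrow.functor_ext fun _ _ f => one_mul f.2)
      mul_one := Cat.Hom.ext (Arrow.functor_ext fun _ _ f => mul_one f.1)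
      mul_assoc := Cat.Hom.ext (Arrow.functor_ext fun _ _ f => assoc f.1.1 f.1.2 f.2) }

end MonObj

section Conj

variable {M N : Mon Cat.{v, u}}

def conj (u : M.Xˣ) : M.X ⥤ M.X where
  obj m := u * m * ↑u⁻¹
  map φ := 𝟙 (u : M.X) ⊙ φ ⊙ 𝟙 (↑u⁻¹ : M.X)
  map_id m := by simp only [id_mulMap_id]
  map_comp φ ψ := by
    rw [← comp_mulMap_comp, ← comp_mulMap_comp, Category.id_comp, Category.id_comp]

theorem arrow_mk_conj_map (u : M.Xˣ) {a b : M.X} (φ : a ⟶ b) :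
    Arrow.mk ((conj u).map φ) =
      ↑(Units.map (idArrow M) u) * Arrow.mk φ * ↑(Units.map (idArrow M) u)⁻¹ := rfl

theorem conj_comp_conj (u u' : M.Xˣ) : conj u ⋙ conj u' = conj (u' * u) :=
  Arrow.functor_ext fun _ _ φ => by
    simp only [Functor.mapArrow_obj, Functor.comp_map, arrow_mk_conj_map, map_mul, mul_inv_rev,
      Units.val_mul, mul_assoc]

theorem conj_one : conj (1 : M.Xˣ) = 𝟭 M.X :=
  Arrow.functor_ext fun _ _ φ => by simp [arrow_mk_conj_map]

theorem conj_comp_conj_inv (u : M.Xˣ) : conj u ⋙ conj u⁻¹ = 𝟭 M.X := by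
  rw [conj_comp_conj, inv_mul_cancel, conj_one]

theorem conj_comp_functor (f : M ⟶ N) (u : M.Xˣ) :
    conj u ⋙ f.hom.toFunctor = f.hom.toFunctor ⋙ conj (Units.map (objHom f) u) :=
  Arrow.functor_ext fun _ _ φ => by
    simp only [Functor.mapArrow_obj, Functor.comp_map, ← arrowHom_arrow_mk, arrow_mk_conj_map,
      map_mul, Units.coe_map, Units.coe_map_inv, arrowHom_idArrow]

def conjHom (u : M.Xˣ) : M ⟶ M :=
  homMk (conj u) (by simp [conj]) fun f g => by
    simp only [arrow_mk_conj_map, arrow_mk_mulMap, mul_assoc, Units.inv_mul_cancel_left]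

def conjIso (u : M.Xˣ) : M ≅ M where
  hom := conjHom u
  inv := conjHom u⁻¹
  hom_inv_id := hom_ext_of_functor_eq (conj_comp_conj_inv u)
  inv_hom_id := hom_ext_of_functor_eq <| by
    change conj u⁻¹ ⋙ conj u = 𝟭 M.X
    simpa only [inv_inv] using conj_comp_conj_inv u⁻¹

variable {C : Mon Cat.{v, u}}

theorem objHom_comp_under_hom {U V : Under C} (k : U ⟶ V) :
    (objHom k.right).comp (objHom U.hom) = objHom V.hom := by
  rw [← Under.w k]
  rfl

def conjAut (u : C.Xˣ) : Aut (Under.forget C) :=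
  NatIso.ofComponents (fun U => conjIso (Units.map (objHom U.hom) u)) fun {U V} k =>
    hom_ext_of_functor_eq <| by
      change k.right.hom.toFunctor ⋙ conj _ = conj _ ⋙ k.right.hom.toFunctor
      rw [conj_comp_functor, ← MonoidHom.comp_apply, ← Units.map_comp, objHom_comp_under_hom]

theorem conjAut_mul (u u' : C.Xˣ) : conjAut (u * u') = conjAut u * conjAut u' := by
  ext U : 3
  refine hom_ext_of_functor_eq ?_
  change conj (Units.map (objHom U.hom) (u * u')) =
    conj (Units.map (objHom U.hom) u') ⋙ conj (Units.map (objHom U.hom) u)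
  rw [conj_comp_conj, map_mul]

def conjAutHom : C.Xˣ →* Aut (Under.forget C) := MonoidHom.mk' conjAut conjAut_mul

end Conj

section FreeExt

variable (C : Mon Cat.{v, u}) (S : Type) [SmallCategory S]

/- The word `(a₀, [(s₁, a₁), …, (sₙ, aₙ)])` stands for `a₀ ⊗ s₁ ⊗ a₁ ⊗ ⋯ ⊗ sₙ ⊗ aₙ`.
Morphisms are componentwise, so there are none between words of different lengths. -/
abbrev Tail : Type u := List (S × C.X)

namespace Tail

variable {C S}

def Hom : List (S × C.X) → List (S × C.X) → Type v
  | [], [] => PUnit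
  | p :: l, q :: m => (p ⟶ q) × Hom l m
  | _, _ => PEmpty

def Hom.id : (l : List (S × C.X)) → Hom l l
  | [] => ⟨⟩
  | p :: l => (𝟙 p, Hom.id l)

def Hom.comp : {l m n : List (S × C.X)} → Hom l m → Hom m n → Hom l n
  | [], [], [], _, _ => ⟨⟩
  | _ :: _, _ :: _, _ :: _, (f, h), (f', h') => (f ≫ f', Hom.comp h h')
  | [], _ :: _, _, x, _ => x.elim
  | _ :: _, [], _, x, _ => x.elim
  | [], [], _ :: _, _, y => y.elim
  | _ :: _, _ :: _, [], _, y => y.elim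

theorem Hom.id_comp : {l m : List (S × C.X)} → (h : Hom l m) → Hom.comp (Hom.id l) h = h
  | [], [], _ => rfl
  | _ :: _, _ :: _, (_, h) => congrArg₂ Prod.mk (Category.id_comp _) (Hom.id_comp h)
  | [], _ :: _, x => x.elim
  | _ :: _, [], x => x.elim

theorem Hom.comp_id : {l m : List (S × C.X)} → (h : Hom l m) → Hom.comp h (Hom.id m) = h
  | [], [], _ => rfl
  | _ :: _, _ :: _, (_, h) => congrArg₂ Prod.mk (Category.comp_id _) (Hom.comp_id h)
  | [], _ :: _, x => x.elim
  | _ :: _, [], x => x.elim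

theorem Hom.assoc : {l m n k : List (S × C.X)} → (h₁ : Hom l m) → (h₂ : Hom m n) →
    (h₃ : Hom n k) → Hom.comp (Hom.comp h₁ h₂) h₃ = Hom.comp h₁ (Hom.comp h₂ h₃)
  | [], [], [], [], _, _, _ => rfl
  | _ :: _, _ :: _, _ :: _, _ :: _, (_, h₁), (_, h₂), (_, h₃) =>
    congrArg₂ Prod.mk (Category.assoc _ _ _) (Hom.assoc h₁ h₂ h₃)
  | [], _ :: _, _, _, x, _, _ => x.elim
  | _ :: _, [], _, _, x, _, _ => x.elim
  | _, _ :: _, [], _, _, x, _ => x.elim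
  | _, [], _ :: _, _, _, x, _ => x.elim
  | _, _, _ :: _, [], _, _, x => x.elim
  | _, _, [], _ :: _, _, _, x => x.elim

instance : Category.{v} (Tail C S) where
  Hom := Hom
  id := Hom.id
  comp := Hom.comp
  id_comp := Hom.id_comp
  comp_id := Hom.comp_id
  assoc := Hom.assoc

end Tail

abbrev Word : Type u := C.X × Tail C S

namespace Word

variable {C S}

def prepend (a : C.X) (s : S) (w : Word C S) : Word C S := (a, (s, w.1) :: w.2)

def prependMap {a a' : C.X} {s t : S} {w w' : Word C S} (f : a ⟶ a') (σ : s ⟶ t)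
    (k : w ⟶ w') : prepend a s w ⟶ prepend a' t w' :=
  (f, ((σ, k.1), k.2))

theorem arrow_mk_prependMap_eq_iff {a a' b b' : C.X} {s t s' t' : S} {w w' y y' : Word C S}
    (f : a ⟶ a') (σ : s ⟶ t) (k : w ⟶ w') (g : b ⟶ b') (τ : s' ⟶ t') (j : y ⟶ y') :
    Arrow.mk (prependMap f σ k) = Arrow.mk (prependMap g τ j) ↔
      Arrow.mk f = Arrow.mk g ∧ Arrow.mk σ = Arrow.mk τ ∧ Arrow.mk k = Arrow.mk j := by
  obtain ⟨_, _⟩ := w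
  obtain ⟨_, _⟩ := w'
  obtain ⟨_, _⟩ := y
  obtain ⟨_, _⟩ := y'
  obtain ⟨_, _⟩ := k
  obtain ⟨_, _⟩ := j
  constructor
  · intro e
    cases e
    exact ⟨rfl, rfl, rfl⟩
  · rintro ⟨e₁, e₂, e₃⟩
    cases e₁
    cases e₂
    cases e₃
    rfl

def mulObj : C.X → Tail C S → Word C S → Word C S
  | a, [], w => (a * w.1, w.2)
  | a, (s, c) :: l, w => prepend a s (mulObj c l w)

def mulMap : {a a' : C.X} → {l l' : Tail C S} → {w w' : Word C S} →
    (a ⟶ a') → (l ⟶ l') → (w ⟶ w') → (mulObj a l w ⟶ mulObj a' l' w')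
  | _, _, [], [], _, _, f, _, k => (f ⊙ k.1, k.2)
  | _, _, _ :: _, _ :: _, _, _, f, ((σ, φ), h), k => prependMap f σ (mulMap φ h k)
  | _, _, [], _ :: _, _, _, _, x, _ => x.elim
  | _, _, _ :: _, [], _, _, _, x, _ => x.elim

theorem mulMap_id : (a : C.X) → (l : Tail C S) → (w : Word C S) →
    mulMap (𝟙 a) (𝟙 l) (𝟙 w) = 𝟙 (mulObj a l w)
  | a, [], w => congrArg (·, 𝟙 w.2) (id_mulMap_id a w.1)
  | a, (s, c) :: l, w => congrArg (prependMap (𝟙 a) (𝟙 s)) (mulMap_id c l w)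

theorem mulMap_comp : {a a' a'' : C.X} → {l l' l'' : Tail C S} → {w w' w'' : Word C S} →
    (f : a ⟶ a') → (f' : a' ⟶ a'') → (h : l ⟶ l') → (h' : l' ⟶ l'') →
    (k : w ⟶ w') → (k' : w' ⟶ w'') →
    mulMap (f ≫ f') (h ≫ h') (k ≫ k') = mulMap f h k ≫ mulMap f' h' k'
  | _, _, _, [], [], [], _, _, _, f, f', _, _, k, k' =>
    congrArg (·, k.2 ≫ k'.2) (comp_mulMap_comp f f' k.1 k'.1)
  | _, _, _, _ :: _, _ :: _, _ :: _, _, _, _, f, f', ((σ, φ), h), ((σ', φ'), h'), k, k' =>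
    congrArg (prependMap (f ≫ f') (σ ≫ σ')) (mulMap_comp φ φ' h h' k k')
  | _, _, _, [], _ :: _, _, _, _, _, _, _, x, _, _, _ => x.elim
  | _, _, _, _ :: _, [], _, _, _, _, _, _, x, _, _, _ => x.elim
  | _, _, _, _, _ :: _, [], _, _, _, _, _, _, x, _, _ => x.elim
  | _, _, _, _, [], _ :: _, _, _, _, _, _, _, x, _, _ => x.elim

def mulFunctor : Word C S × Word C S ⥤ Word C S where
  obj p := mulObj p.1.1 p.1.2 p.2
  map k := mulMap k.1.1 k.1.2 k.2
  map_id p := mulMap_id p.1.1 p.1.2 p.2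
  map_comp k k' := mulMap_comp k.1.1 k'.1.1 k.1.2 k'.1.2 k.2 k'.2

theorem arrow_mk_mulMap_mulMap_nil : {a a' b b' : C.X} → {l l' : Tail C S} →
    {w w' : Word C S} → (f : a ⟶ a') → (g : b ⟶ b') → (h : l ⟶ l') → (k : w ⟶ w') →
    Arrow.mk (mulMap (f ⊙ g) h k) = Arrow.mk (mulMap f (𝟙 ([] : Tail C S)) (mulMap g h k))
  | _, _, _, _, [], [], _, _, f, g, _, k =>
    (arrow_mk_prod_eq_iff _ _).2 ⟨mul_assoc (Arrow.mk f) (Arrow.mk g) (Arrow.mk k.1), rfl⟩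
  | _, _, _, _, _ :: _, _ :: _, _, _, _, _, ((_, _), _), _ => rfl
  | _, _, _, _, [], _ :: _, _, _, _, _, x, _ => x.elim
  | _, _, _, _, _ :: _, [], _, _, _, _, x, _ => x.elim

theorem arrow_mk_mulMap_assoc : {a a' : C.X} → {l l' : Tail C S} → {y y' z z' : Word C S} →
    (f : a ⟶ a') → (h : l ⟶ l') → (ky : y ⟶ y') → (kz : z ⟶ z') →
    Arrow.mk (mulMap (mulMap f h ky).1 (mulMap f h ky).2 kz) =
      Arrow.mk (mulMap f h (mulMap ky.1 ky.2 kz))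
  | _, _, [], [], _, _, _, _, f, _, ky, kz => arrow_mk_mulMap_mulMap_nil f ky.1 ky.2 kz
  | _, _, _ :: _, _ :: _, _, _, _, _, _, ((_, φ), h), ky, kz =>
    (arrow_mk_prependMap_eq_iff _ _ _ _ _ _).2 ⟨rfl, rfl, arrow_mk_mulMap_assoc φ h ky kz⟩
  | _, _, [], _ :: _, _, _, _, _, _, x, _, _ => x.elim
  | _, _, _ :: _, [], _, _, _, _, _, x, _, _ => x.elim

theorem arrow_mk_one_mulMap {w w' : Word C S} (k : w ⟶ w') :
    Arrow.mk (mulMap (𝟙 (1 : C.X)) (𝟙 ([] : Tail C S)) k) = Arrow.mk k :=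
  (arrow_mk_prod_eq_iff _ _).2 ⟨one_mul (Arrow.mk k.1), rfl⟩

theorem arrow_mk_mulMap_one : {a a' : C.X} → {l l' : Tail C S} → (f : a ⟶ a') →
    (h : l ⟶ l') → Arrow.mk (mulMap f h (𝟙 ((1 : C.X), ([] : Tail C S)))) =
      Arrow.mk ((f, h) : ((a, l) : Word C S) ⟶ (a', l'))
  | _, _, [], [], f, _ => (arrow_mk_prod_eq_iff _ _).2 ⟨mul_one (Arrow.mk f), rfl⟩
  | _, _, _ :: _, _ :: _, _, ((_, φ), h) =>
    (arrow_mk_prependMap_eq_iff _ _ _ _ _ _).2 ⟨rfl, rfl, arrow_mk_mulMap_one φ h⟩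
  | _, _, [], _ :: _, _, x => x.elim
  | _, _, _ :: _, [], _, x => x.elim

end Word

def FreeExt : Mon Cat.{v, u} :=
  ofTensor (Word C S) Word.mulFunctor (1, [])
    (fun f g k => Word.arrow_mk_mulMap_assoc f.1 f.2 g k)
    Word.arrow_mk_one_mulMap
    (fun k => Word.arrow_mk_mulMap_one k.1 k.2)

namespace FreeExt

def incl : C ⟶ FreeExt C S :=
  homMk
    { obj a := (a, [])
      map φ := (φ, 𝟙 ([] : Tail C S)) }
    rfl fun _ _ => rfl

def gen (s : S) : (FreeExt C S).X := ((1 : C.X), [(s, 1)])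

def genMap {s t : S} (σ : s ⟶ t) : gen C S s ⟶ gen C S t :=
  Word.prependMap (𝟙 1) σ (𝟙 ((1 : C.X), ([] : Tail C S)))

variable {C S} {M : Mon Cat.{v, u}} (f : C ⟶ M) (G : S ⥤ M.X)

def liftObj : C.X → Tail C S → M.X
  | a, [] => f.hom.toFunctor.obj a
  | a, (s, c) :: l => f.hom.toFunctor.obj a * (G.obj s * liftObj c l)

def liftMap : {a a' : C.X} → {l l' : Tail C S} → (a ⟶ a') → (l ⟶ l') →
    (liftObj f G a l ⟶ liftObj f G a' l')
  | _, _, [], [], φ, _ => f.hom.toFunctor.map φ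
  | _, _, _ :: _, _ :: _, φ, ((σ, ψ), h) =>
    f.hom.toFunctor.map φ ⊙ (G.map σ ⊙ liftMap ψ h)
  | _, _, [], _ :: _, _, x => x.elim
  | _, _, _ :: _, [], _, x => x.elim

theorem liftMap_id : (a : C.X) → (l : Tail C S) →
    liftMap f G (𝟙 a) (𝟙 l) = 𝟙 (liftObj f G a l)
  | a, [] => f.hom.toFunctor.map_id a
  | a, (s, c) :: l => by
    change f.hom.toFunctor.map (𝟙 a) ⊙ (G.map (𝟙 s) ⊙ liftMap f G (𝟙 c) (𝟙 l)) = _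
    rw [liftMap_id c l, f.hom.toFunctor.map_id, G.map_id, id_mulMap_id, id_mulMap_id]
    rfl

theorem liftMap_comp : {a a' a'' : C.X} → {l l' l'' : Tail C S} → (φ : a ⟶ a') →
    (φ' : a' ⟶ a'') → (h : l ⟶ l') → (h' : l' ⟶ l'') →
    liftMap f G (φ ≫ φ') (h ≫ h') = liftMap f G φ h ≫ liftMap f G φ' h'
  | _, _, _, [], [], [], φ, φ', _, _ => f.hom.toFunctor.map_comp φ φ'
  | _, _, _, _ :: _, _ :: _, _ :: _, φ, φ', ((σ, ψ), h), ((σ', ψ'), h') => by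
    change f.hom.toFunctor.map (φ ≫ φ') ⊙
      (G.map (σ ≫ σ') ⊙ liftMap f G (ψ ≫ ψ') (h ≫ h')) = _
    rw [liftMap_comp ψ ψ' h h', f.hom.toFunctor.map_comp, G.map_comp, comp_mulMap_comp,
      comp_mulMap_comp]
    rfl
  | _, _, _, [], _ :: _, _, _, _, x, _ => x.elim
  | _, _, _, _ :: _, [], _, _, _, x, _ => x.elim
  | _, _, _, _, _ :: _, [], _, _, _, x => x.elim
  | _, _, _, _, [], _ :: _, _, _, _, x => x.elim

theorem arrow_mk_liftMap_mulMap_left : {a a' b b' : C.X} → {l l' : Tail C S} →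
    (φ : a ⟶ a') → (ψ : b ⟶ b') → (h : l ⟶ l') →
    Arrow.mk (liftMap f G (φ ⊙ ψ) h) =
      Arrow.mk (f.hom.toFunctor.map φ) * Arrow.mk (liftMap f G ψ h)
  | _, _, _, _, [], [], φ, ψ, _ => arrow_mk_map_mulMap f φ ψ
  | _, _, _, _, _ :: _, _ :: _, φ, ψ, ((σ, χ), h) => by
    change Arrow.mk (f.hom.toFunctor.map (φ ⊙ ψ)) *
        (Arrow.mk (G.map σ) * Arrow.mk (liftMap f G χ h)) =
      Arrow.mk (f.hom.toFunctor.map φ) *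
        (Arrow.mk (f.hom.toFunctor.map ψ) * (Arrow.mk (G.map σ) * Arrow.mk (liftMap f G χ h)))
    rw [arrow_mk_map_mulMap, mul_assoc]
  | _, _, _, _, [], _ :: _, _, _, x => x.elim
  | _, _, _, _, _ :: _, [], _, _, x => x.elim

theorem arrow_mk_liftMap_mulMap : {a a' : C.X} → {l l' : Tail C S} → {w w' : Word C S} →
    (φ : a ⟶ a') → (h : l ⟶ l') → (k : w ⟶ w') →
    Arrow.mk (liftMap f G (Word.mulMap φ h k).1 (Word.mulMap φ h k).2) =
      Arrow.mk (liftMap f G φ h) * Arrow.mk (liftMap f G k.1 k.2)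
  | _, _, [], [], _, _, φ, _, k => arrow_mk_liftMap_mulMap_left f G φ k.1 k.2
  | _, _, _ :: _, _ :: _, _, _, φ, ((σ, ψ), h), k => by
    change Arrow.mk (f.hom.toFunctor.map φ) * (Arrow.mk (G.map σ) *
      Arrow.mk (liftMap f G (Word.mulMap ψ h k).1 (Word.mulMap ψ h k).2)) =
        Arrow.mk (f.hom.toFunctor.map φ) * (Arrow.mk (G.map σ) * Arrow.mk (liftMap f G ψ h)) *
          Arrow.mk (liftMap f G k.1 k.2)
    rw [arrow_mk_liftMap_mulMap ψ h k]
    simp only [mul_assoc]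
  | _, _, [], _ :: _, _, _, _, x, _ => x.elim
  | _, _, _ :: _, [], _, _, _, x, _ => x.elim

def lift : FreeExt C S ⟶ M :=
  homMk
    { obj w := liftObj f G w.1 w.2
      map k := liftMap f G k.1 k.2
      map_id w := liftMap_id f G w.1 w.2
      map_comp k k' := liftMap_comp f G k.1 k'.1 k.2 k'.2 }
    (obj_one f) fun k j => arrow_mk_liftMap_mulMap f G k.1 k.2 j

theorem incl_comp_lift : incl C S ≫ lift f G = f := hom_ext_of_functor_eq rfl

theorem lift_obj_gen (s : S) : (lift f G).hom.toFunctor.obj (gen C S s) = G.obj s := by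
  change f.hom.toFunctor.obj 1 * (G.obj s * f.hom.toFunctor.obj 1) = G.obj s
  rw [obj_one, mul_one, one_mul]

theorem arrow_mk_lift_map_genMap {s t : S} (σ : s ⟶ t) :
    Arrow.mk ((lift f G).hom.toFunctor.map (genMap C S σ)) = Arrow.mk (G.map σ) := by
  change Arrow.mk (f.hom.toFunctor.map (𝟙 1)) * (Arrow.mk (G.map σ) *
    Arrow.mk (f.hom.toFunctor.map (𝟙 1))) = _
  rw [f.hom.toFunctor.map_id, obj_one]
  exact (one_mul _).trans (mul_one _)

variable (C S) in
theorem liftObj_incl_const_gen (s : S) : (a : C.X) → (l : Tail C S) →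
    liftObj (incl C S) ((Functor.const S).obj (gen C S s)) a l = (a, l.map fun p => (s, p.2))
  | a, [] => rfl
  | a, (_, c) :: l => by
    change Word.mulObj a [] (Word.mulObj 1 [(s, 1)] (liftObj (incl C S) _ c l)) = _
    rw [liftObj_incl_const_gen s c l]
    simp [Word.mulObj, Word.prepend]

variable (C S) in
theorem liftObj_incl_const_gen_mul_gen (s t : S) : (a : C.X) → (l : Tail C S) →
    liftObj (incl C S) ((Functor.const S).obj (gen C S s * gen C S t)) a l =
      (a, l.flatMap fun p => [(s, 1), (t, p.2)])
  | a, [] => rfl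
  | a, (_, c) :: l => by
    change Word.mulObj a []
      (Word.mulObj 1 [(s, 1)] (Word.mulObj 1 [(t, 1)] (liftObj (incl C S) _ c l))) = _
    rw [liftObj_incl_const_gen_mul_gen s t c l]
    simp [Word.mulObj, Word.prepend]

/- Substituting `gen s` for every letter keeps the `C`-components `f`, `g` of `d = (f, [(σ, g)])`,
so both are identities if the result is. -/
variable (C S) in
theorem exists_eq_genMap {s t : S} (d : gen C S s ⟶ gen C S t)
    (hd : Arrow.mk ((lift (incl C S) ((Functor.const S).obj (gen C S s))).hom.toFunctor.map d) =
      Arrow.mk (𝟙 (gen C S s))) :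
    ∃ σ : s ⟶ t, d = genMap C S σ := by
  obtain ⟨f, ⟨⟨σ, g⟩, ⟨⟩⟩⟩ := d
  change Arrow.mk (Word.prependMap (f ⊙ 𝟙 1) (𝟙 s)
      ((𝟙 1 ⊙ g, 𝟙 []) : ((1 : C.X) * 1, []) ⟶ (1 * 1, []))) =
    Arrow.mk (Word.prependMap (𝟙 1) (𝟙 s) (𝟙 ((1 : C.X), ([] : Tail C S)))) at hd
  obtain ⟨hf, -, hg⟩ := (Word.arrow_mk_prependMap_eq_iff _ _ _ _ _ _).1 hd
  have hf : f = 𝟙 1 := by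
    rw [arrow_mk_mulMap, arrow_mk_id_one, mul_one, ← arrow_mk_id_one] at hf
    exact (Arrow.mk_inj _ _).1 hf
  have hg : g = 𝟙 1 := by
    replace hg : Arrow.mk (𝟙 1 ⊙ g) = Arrow.mk (𝟙 (1 : C.X)) :=
      ((arrow_mk_prod_eq_iff _ _).1 hg).1
    rw [arrow_mk_mulMap, arrow_mk_id_one, one_mul, ← arrow_mk_id_one] at hg
    exact (Arrow.mk_inj _ _).1 hg
  subst hf hg
  exact ⟨σ, rfl⟩

end FreeExt

end FreeExt

section Isotropy

open FreeExt

variable {C : Mon Cat.{v, u}}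

theorem functor_comp_app_eq (t : Under.forget C ⟶ Under.forget C) {U V : Under C} (k : U ⟶ V) :
    k.right.hom.toFunctor ⋙ (t.app V).hom.toFunctor =
      (t.app U).hom.toFunctor ⋙ k.right.hom.toFunctor :=
  congrArg (fun g => g.hom.toFunctor) (t.naturality k)

variable (C) in
abbrev freeUnder (S : Type) [SmallCategory S] : Under C := Under.mk (incl C S)

def liftUnder {S : Type} [SmallCategory S] (U : Under C) (G : S ⥤ U.right.X) :
    freeUnder C S ⟶ U :=
  Under.homMk (lift U.hom G) (incl_comp_lift U.hom G)

def genImage (t : Under.forget C ⟶ Under.forget C) : Word C (Fin 2) :=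
  (t.app (freeUnder C (Fin 2))).hom.toFunctor.obj (gen C (Fin 2) 0)

theorem app_obj_eq_liftObj (t : Under.forget C ⟶ Under.forget C) (U : Under C) (m : U.right.X) :
    (t.app U).hom.toFunctor.obj m =
      liftObj U.hom ((Functor.const (Fin 2)).obj m) (genImage t).1 (genImage t).2 :=
  calc (t.app U).hom.toFunctor.obj m
      = (t.app U).hom.toFunctor.obj ((lift U.hom ((Functor.const (Fin 2)).obj m)).hom.toFunctor.obj
          (gen C (Fin 2) 0)) :=
        congrArg _ (lift_obj_gen U.hom ((Functor.const (Fin 2)).obj m) 0).symm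
    _ = _ := Functor.congr_obj (functor_comp_app_eq t (liftUnder U ((Functor.const _).obj m)))
          (gen C (Fin 2) 0)

theorem mulObj_genImage (t : Under.forget C ⟶ Under.forget C) :
    Word.mulObj (genImage t).1 ((genImage t).2.map fun p => ((0 : Fin 2), p.2))
        ((genImage t).1, (genImage t).2.map fun p => (1, p.2)) =
      ((genImage t).1, (genImage t).2.flatMap fun p => [(0, 1), (1, p.2)]) := by
  let T := (t.app (freeUnder C (Fin 2))).hom.toFunctor
  have e : ∀ s : Fin 2,
      T.obj (gen C (Fin 2) s) = ((genImage t).1, (genImage t).2.map fun p => (s, p.2)) :=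
    fun s => (app_obj_eq_liftObj t _ _).trans (liftObj_incl_const_gen C (Fin 2) s _ _)
  have e₀₁ : T.obj (gen C (Fin 2) 0 * gen C (Fin 2) 1) =
      ((genImage t).1, (genImage t).2.flatMap fun p => [(0, 1), (1, p.2)]) :=
    (app_obj_eq_liftObj t _ _).trans (liftObj_incl_const_gen_mul_gen C (Fin 2) 0 1 _ _)
  have h : T.obj (gen C (Fin 2) 0 * gen C (Fin 2) 1) =
      T.obj (gen C (Fin 2) 0) * T.obj (gen C (Fin 2) 1) :=
    obj_mul (t.app (freeUnder C (Fin 2))) _ _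
  rw [e₀₁, e, e] at h
  exact h.symm

theorem genImage_tail_ne_nil (α : Aut (Under.forget C)) : (genImage α.hom).2 ≠ [] := by
  intro hnil
  let k : Under.mk (𝟙 C) ⟶ freeUnder C (Fin 2) :=
    Under.homMk (incl C (Fin 2)) (Category.id_comp _)
  have hinv : (α.inv.app (freeUnder C (Fin 2))).hom.toFunctor.obj ((genImage α.hom).1, []) =
      ((α.inv.app (Under.mk (𝟙 C))).hom.toFunctor.obj (genImage α.hom).1, []) :=
    Functor.congr_obj (functor_comp_app_eq α.inv k) (genImage α.hom).1
  have hgen : (α.inv.app (freeUnder C (Fin 2))).hom.toFunctor.obj (genImage α.hom) =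
      gen C (Fin 2) 0 :=
    Functor.congr_obj
      (congrArg (fun g => g.hom.toFunctor) (α.hom_inv_id_app (freeUnder C (Fin 2)))) _
  rw [← Prod.eta (genImage α.hom), hnil, hinv] at hgen
  exact List.cons_ne_nil _ _ (congrArg Prod.snd hgen).symm

/- With two or more letters, the second letter is labelled `0` on the left and `1` on the right. -/
theorem exists_eq_singleton_of_mulObj_eq {u : C.X} {l : Tail C (Fin 2)} (hl : l ≠ [])
    (h : Word.mulObj u (l.map fun p => ((0 : Fin 2), p.2)) (u, l.map fun p => (1, p.2)) =
      (u, l.flatMap fun p => [(0, 1), (1, p.2)])) :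
    ∃ s c, l = [(s, c)] ∧ c * u = 1 := by
  match l, hl, h with
  | [], hl, _ => exact absurd rfl hl
  | [(s, c)], _, h => exact ⟨s, c, rfl, by simpa [Word.mulObj, Word.prepend] using h⟩
  | _ :: _ :: _, _, h => simp [Word.mulObj, Word.prepend] at h

theorem exists_unit_app_obj_eq_conj (α : Aut (Under.forget C)) :
    ∃ u : C.Xˣ, ∀ (U : Under C) (m : U.right.X),
      (α.hom.app U).hom.toFunctor.obj m = (conj (Units.map (objHom U.hom) u)).obj m := by
  obtain ⟨s, c, hl, hcu⟩ :=
    exists_eq_singleton_of_mulObj_eq (genImage_tail_ne_nil α) (mulObj_genImage α.hom)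
  have huc : (genImage α.hom).1 * c = 1 := by
    have h : (1 : C.X) = (genImage α.hom).1 * (1 * c) :=
      (obj_one (α.hom.app (Under.mk (𝟙 C)))).symm.trans
        ((app_obj_eq_liftObj α.hom (Under.mk (𝟙 C)) 1).trans (by rw [hl]; rfl))
    rw [one_mul] at h
    exact h.symm
  refine ⟨⟨_, c, huc, hcu⟩, fun U m => ?_⟩
  rw [app_obj_eq_liftObj, hl]
  exact (mul_assoc _ _ _).symm

theorem arrow_mk_app_map_genMap {S : Type} [SmallCategory S] [Quiver.IsThin S]
    (β : Aut (Under.forget C))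
    (hβ : ∀ (U : Under C) (m : U.right.X), (β.hom.app U).hom.toFunctor.obj m = m)
    {s t : S} (σ : s ⟶ t) :
    Arrow.mk ((β.hom.app (freeUnder C S)).hom.toFunctor.map (genMap C S σ)) =
      Arrow.mk (genMap C S σ) := by
  let b : (FreeExt C S).X ⥤ (FreeExt C S).X := (β.hom.app (freeUnder C S)).hom.toFunctor
  let G := (Functor.const S).obj (gen C S s)
  let P : (FreeExt C S).X ⥤ (FreeExt C S).X := (lift (incl C S) G).hom.toFunctor
  have hbP : P ⋙ b = b ⋙ P := functor_comp_app_eq β.hom (liftUnder (freeUnder C S) G)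
  obtain ⟨d, hd⟩ :
      ∃ d : gen C S s ⟶ gen C S t, Arrow.mk (b.map (genMap C S σ)) = Arrow.mk d :=
    exists_arrow_mk_eq _ (hβ _ _) (hβ _ _)
  have hP : Arrow.mk (P.map d) = Arrow.mk (𝟙 (gen C S s)) :=
    calc Arrow.mk (P.map d)
        = P.mapArrow.obj (Arrow.mk (b.map (genMap C S σ))) := by rw [hd]; rfl
      _ = b.mapArrow.obj (P.mapArrow.obj (Arrow.mk (genMap C S σ))) :=
        congrArg (·.mapArrow.obj (Arrow.mk (genMap C S σ))) hbP.symm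
      _ = b.mapArrow.obj (Arrow.mk (𝟙 (gen C S s))) :=
        congrArg b.mapArrow.obj (arrow_mk_lift_map_genMap _ _ σ)
      _ = Arrow.mk (𝟙 (gen C S s)) :=
        (congrArg Arrow.mk (b.map_id _)).trans (congrArg (fun x => Arrow.mk (𝟙 x)) (hβ _ _))
  obtain ⟨σ', rfl⟩ := exists_eq_genMap C S d hP
  rw [Subsingleton.elim σ' σ] at hd
  exact hd

theorem arrow_mk_app_map_eq (β : Aut (Under.forget C))
    (hβ : ∀ (U : Under C) (m : U.right.X), (β.hom.app U).hom.toFunctor.obj m = m)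
    (U : Under C) {m m' : U.right.X} (φ : m ⟶ m') :
    Arrow.mk ((β.hom.app U).hom.toFunctor.map φ) = Arrow.mk φ := by
  let σ : (0 : Fin 2) ⟶ 1 := homOfLE (by decide)
  let G : Fin 2 ⥤ U.right.X := ComposableArrows.mk₁ φ
  let B : U.right.X ⥤ U.right.X := (β.hom.app U).hom.toFunctor
  let b : (FreeExt C (Fin 2)).X ⥤ (FreeExt C (Fin 2)).X :=
    (β.hom.app (freeUnder C (Fin 2))).hom.toFunctor
  let L : (FreeExt C (Fin 2)).X ⥤ U.right.X := (lift U.hom G).hom.toFunctor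
  have hbL : L ⋙ B = b ⋙ L := functor_comp_app_eq β.hom (liftUnder U G)
  have hL : Arrow.mk (L.map (genMap C _ σ)) = Arrow.mk φ := arrow_mk_lift_map_genMap _ _ σ
  calc Arrow.mk (B.map φ)
      = B.mapArrow.obj (Arrow.mk (L.map (genMap C _ σ))) := congrArg B.mapArrow.obj hL.symm
    _ = L.mapArrow.obj (Arrow.mk (b.map (genMap C _ σ))) :=
      congrArg (·.mapArrow.obj (Arrow.mk (genMap C _ σ))) hbL
    _ = Arrow.mk φ := (congrArg L.mapArrow.obj (arrow_mk_app_map_genMap β hβ σ)).trans hL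

theorem eq_one_of_app_obj_eq (β : Aut (Under.forget C))
    (hβ : ∀ (U : Under C) (m : U.right.X), (β.hom.app U).hom.toFunctor.obj m = m) : β = 1 := by
  ext U : 3
  exact hom_ext_of_functor_eq (Arrow.functor_ext fun _ _ φ => arrow_mk_app_map_eq β hβ U φ)

theorem conjAutHom_injective : Function.Injective (conjAutHom (C := C)) := by
  refine (injective_iff_map_eq_one _).2 fun u hu => Units.ext ?_
  have h := congrArg (fun β : Aut (Under.forget C) =>
    ((β.hom.app (freeUnder C (Fin 2))).hom.toFunctor.obj (gen C (Fin 2) 0)).1) hu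
  change (u : C.X) * 1 = 1 at h
  rwa [mul_one] at h

theorem conjAutHom_surjective : Function.Surjective (conjAutHom (C := C)) := fun α => by
  obtain ⟨u, hu⟩ := exists_unit_app_obj_eq_conj α
  refine ⟨u, inv_mul_eq_one.1 (eq_one_of_app_obj_eq _ fun U (m : U.right.X) => ?_)⟩
  change (conj (Units.map (objHom U.hom) u)⁻¹).obj ((α.hom.app U).hom.toFunctor.obj m) = m
  refine (congrArg (conj (Units.map (objHom U.hom) u)⁻¹).obj (hu U m)).trans ?_
  rw [← Functor.comp_obj, conj_comp_conj, inv_mul_cancel, conj_one, Functor.id_obj]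

end Isotropy

end StrictMonCat

/-- (Main theorem) The covariant isotropy group of a small strict monoidal category `C`
(a monoid object in `Cat`) is isomorphic to its Picard group `(Ob C)ˣ` of invertible objects. -/
theorem isotropy_of_strMonCat_eq_picard (C : Mon Cat.{v, u}) :
    Nonempty (Aut (Under.forget C) ≃* (Ob C)ˣ) :=
  ⟨(MulEquiv.ofBijective StrictMonCat.conjAutHom
    ⟨StrictMonCat.conjAutHom_injective, StrictMonCat.conjAutHom_surjective⟩).symm⟩
end

section
/- The endofunctor of the category of monoids that adjoins an indeterminate, namely the functor MonCat ⥤ MonCat sending a monoid M to the binary coproduct M ⨿ FreeMonoid PUnit (the coproduct in MonCat of M with the free monoid on one generator) and a monoid homomorphism h : M ⟶ N to the induced map of coproducts h ⨿ 𝟙, preserves pullbacks (limits of shape WalkingCospan). -/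
/-!
Every element of `M ⨿ FreeMonoid PUnit` has a unique normal form `m₀ X m₁ X ⋯ X mₖ`, so the
functor is isomorphic to `M ↦ AdjoinX M`, a monoid structure on `List M × M`. On underlying
sets this functor preserves pullbacks: two words over `A` and `B` with the same image in `C`
have the same length and agree letterwise in `C`, so they come from a unique word over
`A ×_C B`. Since the forgetful functor `MonCat ⥤ Type` preserves and reflects pullbacks, the
same holds in `MonCat`.
-/

open CategoryTheory Limits

universe u

namespace CategoryTheory.Limits.Types

variable {X₁ X₂ X₃ X₄ : Type u} {t : X₁ ⟶ X₂} {l : X₁ ⟶ X₃} {r : X₂ ⟶ X₄} {b : X₃ ⟶ X₄}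

lemma list_ext_of_isPullback (h : IsPullback t l r b) {xs ys : List X₁}
    (ht : xs.map t = ys.map t) (hl : xs.map l = ys.map l) : xs = ys := by
  have h_inj : Function.Injective fun x => (t x, l x) := fun _ _ hxy => by
    simp only [Prod.mk.injEq] at hxy
    exact ext_of_isPullback h hxy.1 hxy.2
  apply List.map_injective_iff.2 h_inj
  rw [← List.zip_map', ht, hl, List.zip_map']

lemma exists_list_of_isPullback (h : IsPullback t l r b) :
    ∀ {xs : List X₂} {ys : List X₃}, xs.map r = ys.map b →
      ∃ zs : List X₁, zs.map t = xs ∧ zs.map l = ys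
  | [], [], _ => ⟨[], rfl, rfl⟩
  | x :: xs, y :: ys, hxy => by
    simp only [List.map_cons, List.cons.injEq] at hxy
    obtain ⟨z, rfl, rfl⟩ := exists_of_isPullback h x y hxy.1
    obtain ⟨zs, rfl, rfl⟩ := exists_list_of_isPullback h hxy.2
    exact ⟨z :: zs, rfl, rfl⟩
  | [], _ :: _, hxy | _ :: _, [], hxy => by simp at hxy

end CategoryTheory.Limits.Types

/-- `⟨[l₀, …, lₖ₋₁], a⟩` stands for the word `l₀ X l₁ X ⋯ X lₖ₋₁ X a`. -/
@[ext]
structure AdjoinX (M : Type u) : Type u where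
  init : List M
  last : M

namespace AdjoinX

section Map

variable {α β γ : Type u}

def map (f : α → β) (p : AdjoinX α) : AdjoinX β := ⟨p.init.map f, f p.last⟩

lemma map_id : map (id : α → α) = id := funext fun _ => AdjoinX.ext (List.map_id _) rfl

lemma map_comp (f : α → β) (g : β → γ) : map (g ∘ f) = map g ∘ map f :=
  funext fun _ => AdjoinX.ext (List.map_map ..).symm rfl

end Map

section Monoid

variable {M N : Type u} [Monoid M] [Monoid N]

instance : One (AdjoinX M) := ⟨⟨[], 1⟩⟩

instance : Mul (AdjoinX M) where
  mul p
    | ⟨[], b⟩ => ⟨p.init, p.last * b⟩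
    | ⟨d :: m, b⟩ => ⟨p.init ++ p.last * d :: m, b⟩

@[simp] lemma one_def : (1 : AdjoinX M) = ⟨[], 1⟩ := rfl

@[simp] lemma mk_mul_mk_nil (l : List M) (a b : M) :
    (⟨l, a⟩ * ⟨[], b⟩ : AdjoinX M) = ⟨l, a * b⟩ := rfl

@[simp] lemma mk_mul_mk_cons (l m : List M) (a d b : M) :
    (⟨l, a⟩ * ⟨d :: m, b⟩ : AdjoinX M) = ⟨l ++ a * d :: m, b⟩ := rfl

instance : Monoid (AdjoinX M) where
  mul_assoc := by
    rintro ⟨l, a⟩ ⟨_ | ⟨d, m⟩, b⟩ ⟨_ | ⟨e, n⟩, c⟩ <;> simp [mul_assoc]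
  one_mul := by rintro ⟨_ | ⟨d, l⟩, a⟩ <;> simp
  mul_one := by rintro ⟨l, a⟩; simp

def of : M →* AdjoinX M where
  toFun a := ⟨[], a⟩
  map_one' := rfl
  map_mul' _ _ := rfl

def X : AdjoinX M := ⟨[1], 1⟩

lemma mk_cons (d : M) (l : List M) (a : M) :
    (⟨d :: l, a⟩ : AdjoinX M) = of d * X * ⟨l, a⟩ := by
  cases l <;> simp [of, X]

def lift (f : M →* N) (n : N) : AdjoinX M →* N where
  toFun p := (p.init.map fun m => f m * n).prod * f p.last
  map_one' := by simp
  map_mul' := by rintro ⟨l, a⟩ ⟨_ | ⟨d, m⟩, b⟩ <;> simp [mul_assoc]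

@[simp] lemma lift_of (f : M →* N) (n : N) (a : M) : lift f n (of a) = f a := by
  simp [lift, of]

@[simp] lemma lift_X (f : M →* N) (n : N) : lift f n X = n := by
  simp [lift, X]

@[ext]
lemma hom_ext {φ ψ : AdjoinX M →* N} (h_of : φ.comp of = ψ.comp of) (h_X : φ X = ψ X) :
    φ = ψ := by
  ext ⟨l, a⟩
  induction l with
  | nil => exact DFunLike.congr_fun h_of a
  | cons d l ih =>
    have h_d : φ (of d) = ψ (of d) := DFunLike.congr_fun h_of d
    rw [mk_cons, map_mul, map_mul, map_mul, map_mul, h_d, h_X, ih]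

def mapHom (f : M →* N) : AdjoinX M →* AdjoinX N where
  toFun := map f
  map_one' := by simp [map]
  map_mul' := by rintro ⟨l, a⟩ ⟨_ | ⟨d, m⟩, b⟩ <;> simp [map]

lemma mapHom_X (f : M →* N) : mapHom f X = X := by
  simp [mapHom, map, X]

end Monoid

def typeFunctor : Type u ⥤ Type u where
  obj := AdjoinX
  map f := ↾(map f)
  map_id _ := congrArg TypeCat.ofHom map_id
  map_comp f g := congrArg TypeCat.ofHom (map_comp f g)

open Types in
lemma isPullback_typeFunctor_map {X₁ X₂ X₃ X₄ : Type u} {t : X₁ ⟶ X₂} {l : X₁ ⟶ X₃}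
    {r : X₂ ⟶ X₄} {b : X₃ ⟶ X₄} (h : IsPullback t l r b) :
    IsPullback (typeFunctor.map t) (typeFunctor.map l) (typeFunctor.map r)
      (typeFunctor.map b) := by
  refine (isPullback_iff _ _ _ _).2 ⟨(h.toCommSq.map typeFunctor).w, ?_, ?_⟩
  · rintro (⟨xs, x⟩ : AdjoinX X₁) ⟨ys, y⟩ ⟨ht, hl⟩
    obtain ⟨ht_init, ht_last⟩ := AdjoinX.mk.inj ht
    obtain ⟨hl_init, hl_last⟩ := AdjoinX.mk.inj hl
    exact AdjoinX.ext (list_ext_of_isPullback h ht_init hl_init)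
      (ext_of_isPullback h ht_last hl_last)
  · rintro (⟨xs, x⟩ : AdjoinX X₂) (⟨ys, y⟩ : AdjoinX X₃) hxy
    obtain ⟨h_init, h_last⟩ := AdjoinX.mk.inj hxy
    obtain ⟨zs, rfl, rfl⟩ := exists_list_of_isPullback h h_init
    obtain ⟨z, rfl, rfl⟩ := exists_of_isPullback h x y h_last
    exact ⟨⟨zs, z⟩, rfl, rfl⟩

instance : PreservesLimitsOfShape WalkingCospan typeFunctor.{u} :=
  preservesLimitsOfShape_walkingCospan_of_forall_isPullback fun _ _ _ f g _ =>
    ⟨_, _, _, .of_hasPullback f g, isPullback_typeFunctor_map (.of_hasPullback f g)⟩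

def functor : MonCat.{u} ⥤ MonCat.{u} where
  obj M := MonCat.of (AdjoinX M)
  map f := MonCat.ofHom (mapHom f.hom)

def functorCompForgetIso : functor ⋙ forget MonCat ≅ forget MonCat ⋙ typeFunctor :=
  NatIso.ofComponents (fun M => Iso.refl (AdjoinX M)) fun _ => rfl

instance : PreservesLimitsOfShape WalkingCospan functor.{u} := by
  have := preservesLimitsOfShape_of_natIso (J := WalkingCospan) functorCompForgetIso.{u}.symm
  exact preservesLimitsOfShape_of_reflects_of_preserves functor (forget MonCat)

section Coproduct

variable (M : MonCat.{u})

def inl : M ⟶ functor.obj M := MonCat.ofHom of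

def inr : MonCat.of (FreeMonoid PUnit.{u + 1}) ⟶ functor.obj M :=
  MonCat.ofHom (FreeMonoid.lift fun _ => X)

lemma inr_of (x : PUnit) : inr M (FreeMonoid.of x) = X :=
  FreeMonoid.lift_eval_of _ x

def isColimitBinaryCofan : IsColimit (BinaryCofan.mk (inl M) (inr M)) :=
  BinaryCofan.IsColimit.mk _ (fun f g => MonCat.ofHom (lift f.hom (g (FreeMonoid.of ⟨⟩))))
    (fun f _ => MonCat.hom_ext (MonoidHom.ext (lift_of f.hom _)))
    (fun f _ => MonCat.hom_ext (FreeMonoid.hom_eq fun x =>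
      (congrArg (lift f.hom _) (inr_of M x)).trans (lift_X f.hom _)))
    (fun _ _ m h_of h_X => MonCat.hom_ext <| hom_ext
      (MonoidHom.ext fun a => (ConcreteCategory.congr_hom h_of a).trans (lift_of _ _ a).symm)
      ((congrArg m (inr_of M ⟨⟩).symm).trans
        ((ConcreteCategory.congr_hom h_X _).trans (lift_X _ _).symm)))

variable {M} {N : MonCat.{u}} (f : M ⟶ N)

@[simp] lemma inl_comp_functor_map : inl M ≫ functor.map f = f ≫ inl N := rfl

@[simp] lemma inr_comp_functor_map : inr M ≫ functor.map f = inr N :=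
  MonCat.hom_ext (FreeMonoid.hom_eq fun x => by
    change mapHom f.hom (inr M (FreeMonoid.of x)) = inr N (FreeMonoid.of x)
    rw [inr_of, inr_of, mapHom_X])

end Coproduct

noncomputable def coprodToFunctor :
    coprod.functor.flip.obj (MonCat.of (FreeMonoid PUnit.{u + 1})) ⟶ functor where
  app M := coprod.desc (inl M) (inr M)
  naturality M N f := by
    change coprod.map f (𝟙 _) ≫ coprod.desc (inl N) (inr N) =
      coprod.desc (inl M) (inr M) ≫ functor.map f
    apply coprod.hom_ext <;> simp

instance (M : MonCat.{u}) : IsIso (coprodToFunctor.app M) :=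
  (colimit.isColimit _).nonempty_isColimit_iff_isIso_desc.1 ⟨isColimitBinaryCofan M⟩

instance : IsIso coprodToFunctor.{u} := NatIso.isIso_of_isIso_app _

end AdjoinX

/-- The endofunctor of `MonCat` adjoining an indeterminate, i.e. the functor sending a monoid
`M` to the binary coproduct `M ⨿ FreeMonoid PUnit` of `M` with the free monoid on one
generator, and a homomorphism `h` to `h ⨿ 𝟙`, preserves pullbacks. -/
theorem coprod_freeMonoid_preserves_pullbacks :
    Nonempty (PreservesLimitsOfShape WalkingCospan
      (coprod.functor.flip.obj (MonCat.of (FreeMonoid PUnit.{u + 1})))) :=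
  ⟨preservesLimitsOfShape_of_natIso (asIso AdjoinX.coprodToFunctor).symm⟩
end

section
/- Let M be a monoid and let M⟨x⟩ denote the coproduct (free product) of M with the free monoid on one generator x, i.e., Monoid.Coprod M (FreeMonoid PUnit), with ι : M → M⟨x⟩ the canonical inclusion and x ∈ M⟨x⟩ the image of the generator. Then every element of M⟨x⟩ has a unique expanded normal form: the map sending a nonempty list (m₀, m₁, …, mₙ) of elements of M to the product ι(m₀) * x * ι(m₁) * x * ⋯ * x * ι(mₙ) in M⟨x⟩ is a bijection from nonempty lists over M to M⟨x⟩. -/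
/-!
Van der Waerden's trick: `M ∗ FreeMonoid PUnit` acts on the set `M × List M` of normal forms,
`m` multiplying the head on the left and `x` pushing the head onto the list and replacing it
by `1`. Evaluation of normal forms is equivariant for this action, and acting on `(1, [])`
inverts it.
-/

open Monoid.Coprod

namespace ExpandedNormalForm

variable {M : Type*} [Monoid M]

def X : M ∗ FreeMonoid PUnit := inr (FreeMonoid.of PUnit.unit)

def eval (p : M × List M) : M ∗ FreeMonoid PUnit :=
  inl p.1 * (p.2.map fun m => X * inl m).prod

def mulFst : M →* Function.End (M × List M) where
  toFun m s := (m * s.1, s.2)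
  map_one' := funext fun s => Prod.ext (one_mul s.1) rfl
  map_mul' m n := funext fun s => Prod.ext (mul_assoc m n s.1) rfl

def act : M ∗ FreeMonoid PUnit →* Function.End (M × List M) :=
  lift mulFst (FreeMonoid.lift fun _ s => (1, s.1 :: s.2))

lemma act_one (s : M × List M) : act 1 s = s := by
  rw [map_one]; rfl

lemma act_mul (y z : M ∗ FreeMonoid PUnit) (s : M × List M) :
    act (y * z) s = act y (act z s) := by
  rw [map_mul]; rfl

lemma act_inl (m : M) (s : M × List M) : act (inl m) s = (m * s.1, s.2) := rfl

lemma act_X (s : M × List M) : act X s = (1, s.1 :: s.2) := rfl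

lemma eval_act_inl (m : M) (s : M × List M) : eval (act (inl m) s) = inl m * eval s := by
  simp only [eval, act_inl, map_mul, mul_assoc]

lemma eval_act_X (s : M × List M) : eval (act X s) = X * eval s := by
  simp only [eval, act_X, map_one, one_mul, List.map_cons, List.prod_cons, mul_assoc]

lemma eval_act_inr (n : FreeMonoid PUnit) (s : M × List M) :
    eval (act (inr n) s) = inr n * eval s := by
  induction n using FreeMonoid.inductionOn' generalizing s with
  | one => rw [map_one, act_one, one_mul]
  | of_mul u n ih =>
    rw [map_mul, act_mul, ← X, eval_act_X, ih, mul_assoc]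

lemma eval_act (y : M ∗ FreeMonoid PUnit) (s : M × List M) : eval (act y s) = y * eval s := by
  induction y using induction_on' generalizing s with
  | one => rw [act_one, one_mul]
  | inl_mul m y ih => rw [act_mul, eval_act_inl, ih, mul_assoc]
  | inr_mul n y ih => rw [act_mul, eval_act_inr, ih, mul_assoc]

lemma act_prod_map (l : List M) : act (l.map fun m => X * inl m).prod (1, []) = (1, l) := by
  induction l with
  | nil => rw [List.map_nil, List.prod_nil, act_one]
  | cons m l ih =>
    rw [List.map_cons, List.prod_cons, act_mul, act_mul, ih, act_inl, act_X, mul_one]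

def normalForm (y : M ∗ FreeMonoid PUnit) : M × List M := act y (1, [])

lemma normalForm_eval (p : M × List M) : normalForm (eval p) = p := by
  rw [normalForm, eval, act_mul, act_prod_map, act_inl, mul_one]

lemma eval_normalForm (y : M ∗ FreeMonoid PUnit) : eval (normalForm y) = y := by
  rw [normalForm, eval_act, eval, List.map_nil, List.prod_nil, map_one, mul_one, mul_one]

theorem eval_bijective : Function.Bijective (eval (M := M)) :=
  Function.bijective_iff_has_inverse.mpr ⟨normalForm, normalForm_eval, eval_normalForm⟩

end ExpandedNormalForm

/-- Expanded normal forms in a monoid with an adjoined indeterminate: every element of the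
coproduct `M ∗ FreeMonoid PUnit` of a monoid `M` with the free monoid on one generator `x`
is uniquely of the form `m₀ * x * m₁ * x * ⋯ * x * mₙ` for a nonempty list `(m₀, m₁, …, mₙ)`
of elements of `M`; i.e. the evaluation map from nonempty lists over `M` to the coproduct is
a bijection. -/
theorem bijective_expanded_normal_form (M : Type*) [Monoid M] :
    Function.Bijective (fun p : M × List M =>
      (Monoid.Coprod.inl p.1 : Monoid.Coprod M (FreeMonoid PUnit)) *
        (p.2.map (fun m =>
          Monoid.Coprod.inr (FreeMonoid.of PUnit.unit) * Monoid.Coprod.inl m)).prod) :=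
  ExpandedNormalForm.eval_bijective
end

section
/- For every small category J and every functor F : J ⥤ Type, the covariant isotropy group of F in the functor category J ⥤ Type is isomorphic to the automorphism group of the identity functor of J: there is a group isomorphism between Aut(Under.forget F), the group of natural automorphisms of the coslice projection functor Under.forget F : Under F ⥤ (J ⥤ Type), and Aut(𝟭 J), the group of natural automorphisms of the identity functor 𝟭 J : J ⥤ J. -/
/-!
Every element `x : X.right.obj j` of an object `X` of `Under F` is the image of the generator
`𝟙 j` of the free extension `F ⟶ F ⊔ Hom(j, -)` under a morphism of `Under F`, so a natural
endomorphism `α` of `Under.forget F` is determined by where it sends these generators. When the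
components of `α` are injective the generator cannot land in `F`, so it lands on some
`θ j : j ⟶ j`; naturality of `α` on the free extensions makes `θ` natural, and then `α` acts on
every `X` by `X.right.map (θ j)`. Hence the action of `End (𝟭 J)` on `Under.forget F` is injective
and hits every automorphism, so it restricts to an isomorphism of unit groups.
-/

open CategoryTheory

theorem Units.map_bijective_of_injective {M N : Type*} [Monoid M] [Monoid N] {f : M →* N}
    (hf : Function.Injective f) (hrange : ∀ u : Nˣ, (u : N) ∈ Set.range f) :
    Function.Bijective (Units.map f) := by
  refine ⟨Units.map_injective hf, fun u => ?_⟩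
  obtain ⟨a, ha⟩ := hrange u
  obtain ⟨b, hb⟩ := hrange u⁻¹
  have hab : a * b = 1 := hf (by simp [ha, hb])
  have hba : b * a = 1 := hf (by simp [ha, hb])
  exact ⟨⟨a, b, hab, hba⟩, Units.ext ha⟩

namespace CategoryTheory

def centerAction {J C E : Type*} [Category J] [Category C] [Category E] (G : E ⥤ J ⥤ C) :
    End (𝟭 J) →* End G where
  toFun θ :=
    { app X :=
        { app j := (G.obj X).map (θ.app j)
          naturality j k f := by simpa using (G.obj X).congr_map (θ.naturality f) }
      naturality X Y h := by ext j; exact ((G.map h).naturality (θ.app j)).symm }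
  map_one' := by apply NatTrans.ext; ext; simp [End.one_def]
  map_mul' θ θ' := by apply NatTrans.ext; ext X j; exact (G.obj X).map_comp (θ'.app j) (θ.app j)

universe v u

namespace Under

open FunctorToTypes Opposite

variable {J : Type u} [Category.{v} J] (F : J ⥤ Type v)

/-- The object `F ⟶ F ⊔ Hom(j, -)` of `Under F`, freely generated by an element at `j`. -/
def free (j : J) : Under F :=
  Under.mk (coprod.inl : F ⟶ coprod F (coyoneda.obj (op j)))

variable {F}

def freeLift {j : J} (X : Under F) (x : X.right.obj j) : free F j ⟶ X :=
  Under.homMk (coprod.desc X.hom (coyonedaEquiv.symm x)) (coprod.desc_inl _ _)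

@[simp]
lemma freeLift_right_app_inr {j : J} (X : Under F) (x : X.right.obj j) {k : J} (f : j ⟶ k) :
    (freeLift X x).right.app k (Sum.inr f) = X.right.map f x := rfl

abbrev freeGen (j : J) : (free F j).right.obj j := Sum.inr (𝟙 j)

@[simp]
lemma freeLift_right_app_freeGen {j : J} (X : Under F) (x : X.right.obj j) :
    (freeLift X x).right.app j (freeGen j) = x :=
  X.right.map_id_apply j x

variable (α : Under.forget F ⟶ Under.forget F)

lemma app_eq_freeLift_app_freeGen {j : J} (X : Under F) (x : X.right.obj j) :
    (α.app X).app j x =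
      (freeLift X x).right.app j ((α.app (free F j)).app j (freeGen j)) := by
  conv_lhs => rw [← freeLift_right_app_freeGen X x]
  exact ConcreteCategory.congr_hom (congr_app (α.naturality (freeLift X x)) j) (freeGen j)

lemma exists_app_freeGen_eq_inr (hα : ∀ X j, Function.Injective ((α.app X).app j)) (j : J) :
    ∃ θ : j ⟶ j, (α.app (free F j)).app j (freeGen j) = Sum.inr θ := by
  rcases hgen : (α.app (free F j)).app j (freeGen j) with a | θ
  · have hfix : (α.app (free F j)).app j (Sum.inl a) = Sum.inl a := by
      rw [app_eq_freeLift_app_freeGen α (free F j) (Sum.inl a), hgen]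
      rfl
    exact absurd (hα _ j (hgen.trans hfix.symm)) Sum.inr_ne_inl
  · exact ⟨θ, rfl⟩

lemma app_eq_map_of_app_freeGen {j : J} {θ : j ⟶ j}
    (hθ : (α.app (free F j)).app j (freeGen j) = Sum.inr θ) (X : Under F)
    (x : X.right.obj j) : (α.app X).app j x = X.right.map θ x := by
  rw [app_eq_freeLift_app_freeGen, hθ, freeLift_right_app_inr]

lemma comp_eq_comp_of_app_freeGen {j k : J} (f : j ⟶ k) {θj : j ⟶ j} {θk : k ⟶ k}
    (hj : (α.app (free F j)).app j (freeGen j) = Sum.inr θj)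
    (hk : (α.app (free F k)).app k (freeGen k) = Sum.inr θk) : θj ≫ f = f ≫ θk := by
  have hnat := NatTrans.naturality_apply (α.app (free F j)) f (freeGen j)
  have hk' := app_eq_map_of_app_freeGen α hk (free F j) ((free F j).right.map f (freeGen j))
  rw [hj] at hnat
  have h : (Sum.inr ((𝟙 j ≫ f) ≫ θk) : (free F j).right.obj k) = Sum.inr (θj ≫ f) :=
    hk'.symm.trans hnat
  simpa using (Sum.inr.inj h).symm

theorem exists_centerAction_forget_eq (hα : ∀ X j, Function.Injective ((α.app X).app j)) :
    ∃ θ : End (𝟭 J), centerAction (Under.forget F) θ = α := by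
  choose θ hθ using exists_app_freeGen_eq_inr α hα
  refine ⟨{ app := θ, naturality := fun j k f => ?_ }, ?_⟩
  · exact (comp_eq_comp_of_app_freeGen α f (hθ j) (hθ k)).symm
  · apply NatTrans.ext; ext X j x
    exact (app_eq_map_of_app_freeGen α (hθ j) X x).symm

theorem centerAction_forget_injective : Function.Injective (centerAction (Under.forget F)) := by
  intro θ θ' h
  apply NatTrans.ext; ext j
  have hgen : (Sum.inr (𝟙 j ≫ θ.app j) : (free F j).right.obj j) = Sum.inr (𝟙 j ≫ θ'.app j) :=
    ConcreteCategory.congr_hom (congr_app (congr_app h (free F j)) j) (freeGen j)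
  simpa using Sum.inr.inj hgen

end Under

end CategoryTheory

/-- The covariant isotropy group of any object `F` of a presheaf category `J ⥤ Type` is
isomorphic to the automorphism group of the identity functor of `J` (the "center" of `J`). -/
theorem isotropy_of_presheaf_eq_center (J : Type) [SmallCategory J] (F : J ⥤ Type) :
    Nonempty (Aut (Under.forget F) ≃* Aut (𝟭 J)) := by
  have hbij : Function.Bijective (Units.map (centerAction (Under.forget F))) :=
    Units.map_bijective_of_injective Under.centerAction_forget_injective fun u =>
      Under.exists_centerAction_forget_eq u.val fun X j =>
        (((Aut.unitsEndEquivAut _ u).app X).app j).toEquiv.injective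
  exact ⟨(Aut.unitsEndEquivAut _).symm.trans <|
    (MulEquiv.ofBijective _ hbij).symm.trans (Aut.unitsEndEquivAut _)⟩
end

section
/- The covariant isotropy group functor of a presheaf category is constant: for every small category J, every natural transformation η : F ⟶ F' between functors F, F' : J ⥤ Type, the induced group homomorphism from Aut(Under.forget F) to Aut(Under.forget F') (given by restricting a natural automorphism of Under.forget F along the functor Under F' ⥤ Under F induced by η, which commutes with the coslice projections) is compatible with the isomorphisms Aut(Under.forget F) ≅ Aut(𝟭 J) and Aut(Under.forget F') ≅ Aut(𝟭 J); in particular it is a group isomorphism. -/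
open CategoryTheory

/-!
For `j : J`, the object `F ⟶ F ⊕ Hom(j, -)` of `Under F` carries the generic element `𝟙 j` at `j`:
every element of `N.right.obj j`, for `N : Under F`, is its image under a morphism of `Under F`.
So a natural endomorphism of `Under.forget F` is determined by its values on these generic
elements. For an automorphism these values lie in the `Hom(j, -)` summand (the inverse preserves
the `F` summand, which is the image of the initial object `𝟙 F`), say at `ψ j : j ⟶ j`, and then
naturality forces the automorphism to act on every `N` by `N.right.map (ψ _)`, with `ψ` a natural
automorphism of `𝟭 J`. Hence `Aut (Under.forget F) ≃* Aut (𝟭 J)` for every `F`, and whiskering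
along `Under.map η` corresponds to the identity of `Aut (𝟭 J)` because `Under.map η` does not
change the underlying functor.
-/

namespace CategoryTheory.FunctorToTypes

variable {J : Type} [SmallCategory J] (F : J ⥤ Type)

def adjoinElement (j : J) : J ⥤ Type where
  obj i := F.obj i ⊕ (j ⟶ i)
  map g := ↾(Sum.map (F.map g) (· ≫ g))
  map_id i := by ext (x | x) <;> simp
  map_comp g h := by ext (x | x) <;> simp

def toAdjoinElement (j : J) : F ⟶ adjoinElement F j where
  app i := ↾Sum.inl

def underAdjoinElement (j : J) : Under F := Under.mk (toAdjoinElement F j)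

variable {F}

def liftAdjoinElement {j : J} (N : Under F) (x : N.right.obj j) :
    underAdjoinElement F j ⟶ N :=
  Under.homMk
    { app i := ↾(Sum.elim (N.hom.app i) (N.right.map · x))
      naturality i k g := by
        ext (a | h)
        · exact NatTrans.naturality_apply N.hom g a
        · exact N.right.map_comp_apply h g x }

@[simp]
lemma liftAdjoinElement_right_app_inr {j i : J} (N : Under F) (x : N.right.obj j) (h : j ⟶ i) :
    (liftAdjoinElement N x).right.app i (Sum.inr h) = N.right.map h x := rfl

lemma app_app_eq_liftAdjoinElement (f : Under.forget F ⟶ Under.forget F) {j : J} (N : Under F)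
    (x : N.right.obj j) :
    (f.app N).app j x = (liftAdjoinElement N x).right.app j
      ((f.app (underAdjoinElement F j)).app j (Sum.inr (𝟙 j))) :=
  calc (f.app N).app j x
      = (f.app N).app j ((liftAdjoinElement N x).right.app j (Sum.inr (𝟙 j))) := by simp
    _ = _ := types_congr_hom (NatTrans.congr_app (f.naturality (liftAdjoinElement N x)) j)
        (Sum.inr (𝟙 j))

lemma app_underAdjoinElement_inl (f : Under.forget F ⟶ Under.forget F) {j i : J} (a : F.obj i) :
    (f.app (underAdjoinElement F j)).app i (Sum.inl a) =
      Sum.inl ((f.app (Under.mk (𝟙 F))).app i a) :=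
  types_congr_hom (NatTrans.congr_app (f.naturality
    (Under.homMk (U := Under.mk (𝟙 F)) (V := underAdjoinElement F j) (toAdjoinElement F j)
      (Category.id_comp _))) i) a

lemma exists_hom_app_underAdjoinElement_eq_inr (α : Under.forget F ≅ Under.forget F) (j : J) :
    ∃ r : j ⟶ j, (α.hom.app (underAdjoinElement F j)).app j (Sum.inr (𝟙 j)) = Sum.inr r := by
  rcases h : (α.hom.app (underAdjoinElement F j)).app j (Sum.inr (𝟙 j)) with a | r
  · have hα := types_congr_hom (Iso.hom_inv_id_app_app α (underAdjoinElement F j) j)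
      (Sum.inr (𝟙 j))
    -- `types_comp_apply` does not fire: elements are typed by `N.right`, morphisms by
    -- `(Under.forget F).obj N`, so the composite is unfolded by `change`
    change (α.inv.app (underAdjoinElement F j)).app j
      ((α.hom.app (underAdjoinElement F j)).app j (Sum.inr (𝟙 j))) = Sum.inr (𝟙 j) at hα
    rw [h, app_underAdjoinElement_inl] at hα
    exact absurd hα Sum.inl_ne_inr
  · exact ⟨r, rfl⟩

variable (F) in
def endUnderForget : End (𝟭 J) →* End (Under.forget F) where
  toFun ψ :=
    { app N := Functor.whiskerRight ψ N.right
      naturality N M m := by ext i : 2; exact (m.right.naturality (ψ.app i)).symm }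
  map_one' := NatTrans.ext <| funext fun N => NatTrans.ext <| funext N.right.map_id
  map_mul' ψ φ := NatTrans.ext <| funext fun N => NatTrans.ext <| funext fun i =>
    N.right.map_comp (φ.app i) (ψ.app i)

lemma endUnderForget_app_underAdjoinElement_inr (ψ : End (𝟭 J)) (j : J) :
    ((endUnderForget F ψ).app (underAdjoinElement F j)).app j (Sum.inr (𝟙 j)) =
      Sum.inr (ψ.app j) :=
  congrArg Sum.inr (Category.id_comp (ψ.app j))

lemma endUnderForget_injective : Function.Injective (endUnderForget F) := fun ψ φ h =>
  NatTrans.ext <| funext fun j => Sum.inr_injective <| by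
    rw [← endUnderForget_app_underAdjoinElement_inr, ← endUnderForget_app_underAdjoinElement_inr,
      h]

lemma exists_endUnderForget_eq (f : Under.forget F ⟶ Under.forget F)
    (hf : ∀ j, ∃ r : j ⟶ j,
      (f.app (underAdjoinElement F j)).app j (Sum.inr (𝟙 j)) = Sum.inr r) :
    ∃ ψ, endUnderForget F ψ = f := by
  choose r hr using hf
  have app_eq (N : Under F) (j : J) (x : N.right.obj j) :
      (f.app N).app j x = N.right.map (r j) x := by
    rw [app_app_eq_liftAdjoinElement, hr]
    rfl
  have naturality (j k : J) (g : j ⟶ k) : g ≫ r k = r j ≫ g := by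
    have h := (app_eq _ k ((underAdjoinElement F j).right.map g (Sum.inr (𝟙 j)))).symm.trans
      (types_congr_hom ((f.app (underAdjoinElement F j)).naturality g) (Sum.inr (𝟙 j)))
    change _ = (adjoinElement F j).map g
      ((f.app (underAdjoinElement F j)).app j (Sum.inr (𝟙 j))) at h
    rw [hr] at h
    simpa using Sum.inr_injective h
  exact ⟨{ app := r, naturality := naturality },
    NatTrans.ext <| funext fun N => NatTrans.ext <| funext fun j =>
      ConcreteCategory.hom_ext _ _ fun x => (app_eq N j x).symm⟩

variable (F) in
def autUnderForget : Aut (𝟭 J) →* Aut (Under.forget F) :=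
  (Aut.unitsEndEquivAut _).toMonoidHom.comp <|
    (Units.map (endUnderForget F)).comp (Aut.unitsEndEquivAut _).symm.toMonoidHom

lemma autUnderForget_hom (ψ : Aut (𝟭 J)) :
    (autUnderForget F ψ).hom = endUnderForget F ψ.hom := rfl

lemma autUnderForget_injective : Function.Injective (autUnderForget F) := fun ψ φ h =>
  Iso.ext <| endUnderForget_injective <| by rw [← autUnderForget_hom, ← autUnderForget_hom, h]

lemma autUnderForget_surjective : Function.Surjective (autUnderForget F) := fun α => by
  obtain ⟨a, ha⟩ := exists_endUnderForget_eq α.hom (exists_hom_app_underAdjoinElement_eq_inr α)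
  obtain ⟨b, hb⟩ :=
    exists_endUnderForget_eq α.inv (exists_hom_app_underAdjoinElement_eq_inr α.symm)
  refine ⟨⟨a, b, endUnderForget_injective (F := F) ?_, endUnderForget_injective (F := F) ?_⟩,
    Iso.ext ha⟩
  · change endUnderForget F (b * a) = endUnderForget F 1
    rw [map_mul, map_one, ha, hb]
    exact α.hom_inv_id
  · change endUnderForget F (a * b) = endUnderForget F 1
    rw [map_mul, map_one, ha, hb]
    exact α.inv_hom_id

variable (F) in
noncomputable def autUnderForgetEquiv : Aut (𝟭 J) ≃* Aut (Under.forget F) :=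
  MulEquiv.ofBijective (autUnderForget F) ⟨autUnderForget_injective, autUnderForget_surjective⟩

end CategoryTheory.FunctorToTypes

open CategoryTheory.FunctorToTypes

/-- The covariant isotropy group functor of a presheaf category `J ⥤ Type` is constant:
any natural transformation `η : F ⟶ F'` induces, by whiskering with the functor
`Under.map η : Under F' ⥤ Under F` (which commutes with the coslice projections), a group
homomorphism from `Aut (Under.forget F)` to `Aut (Under.forget F')`, and this homomorphism
is compatible with the identifications of both isotropy groups with `Aut (𝟭 J)` (which send
`ψ : Aut (𝟭 J)` to the natural automorphism whose component at `η : F ⟶ N` has components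
`N.map (ψ.app i)`); in particular the induced homomorphism is a group isomorphism. -/
theorem isotropy_of_presheaf_constant (J : Type) [SmallCategory J] (F F' : J ⥤ Type)
    (η : F ⟶ F') :
    ∃ e : Aut (Under.forget F) ≃* Aut (Under.forget F'),
      ∀ α : Aut (Under.forget F),
        -- `e` is the homomorphism induced by whiskering with `Under.map η`
        (∀ N' : Under F', (e α).hom.app N' = α.hom.app ((Under.map η).obj N')) ∧
        -- and it is compatible with the identifications with `Aut (𝟭 J)`
        (∀ ψ : Aut (𝟭 J),
          (∀ (N : Under F) (i : J), (α.hom.app N).app i = N.right.map (ψ.hom.app i)) →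
          (∀ (N' : Under F') (i : J),
            ((e α).hom.app N').app i = N'.right.map (ψ.hom.app i))) := by
  refine ⟨(autUnderForgetEquiv F).symm.trans (autUnderForgetEquiv F'), fun α => ?_⟩
  obtain ⟨ψ, rfl⟩ := (autUnderForgetEquiv F).surjective α
  simp only [MulEquiv.trans_apply, MulEquiv.symm_apply_apply]
  refine ⟨fun N' => rfl, fun φ hφ N' i => ?_⟩
  obtain rfl : ψ = φ := autUnderForget_injective <| Iso.ext <|
    NatTrans.ext <| funext fun N => NatTrans.ext <| funext (hφ N)
  rfl
end

section
/- For every monoid M and every M-set, i.e., every functor X : SingleObj M ⥤ Type, the covariant isotropy group of X in the category of M-sets is isomorphic to the group of invertible elements of the center of M: there is a group isomorphism between Aut(Under.forget X), the group of natural automorphisms of the coslice projection functor Under.forget X : Under X ⥤ (SingleObj M ⥤ Type), and (Submonoid.center M)ˣ. -/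
/-!
A central element `z` acts on every `M`-set by an equivariant map, naturally in the `M`-set, so it
gives an endomorphism of `Under.forget X`. Conversely, let `W = X ⊕ M` be `X` with one free
generator `g = inr 1` adjoined, viewed as an object under `X`. Every element `y` of an object
`X → Y` under `X` is the image of `g` under a map under `X`, so by naturality an endomorphism `η`
with `η g = inr z` acts on `y` as `z`; equivariance of `η` at `W` then forces `z` to be central.
If `η` is invertible, `η g` cannot lie in `X`, because naturality along `X → W` shows that the
inverse of `η` maps `X` into `X`.
-/

open CategoryTheory

theorem Units.exists_map_eq_of_injective {M N : Type*} [Monoid M] [Monoid N] {f : M →* N}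
    (hf : Function.Injective f) {u : Nˣ} (hu : (u : N) ∈ Set.range f)
    (hu' : ((u⁻¹ : Nˣ) : N) ∈ Set.range f) : ∃ v : Mˣ, Units.map f v = u := by
  obtain ⟨a, ha⟩ := hu
  obtain ⟨b, hb⟩ := hu'
  exact ⟨⟨a, b, hf (by simp [ha, hb]), hf (by simp [ha, hb])⟩, Units.ext ha⟩

namespace CategoryTheory.MSet

variable {M : Type} [Monoid M]

local notation "⋆" => SingleObj.star M

theorem app_smul {Y Y' : SingleObj M ⥤ Type} (f : Y ⟶ Y') (m : M) (y : Y.obj ⋆) :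
    f.app ⋆ (m • y) = m • f.app ⋆ y :=
  NatTrans.naturality_apply f (show ⋆ ⟶ ⋆ from m) y

def centralSMul (Y : SingleObj M ⥤ Type) (z : Submonoid.center M) : Y ⟶ Y where
  app _ := ↾fun y : Y.obj ⋆ => (z : M) • y
  naturality _ _ m := by
    ext (y : Y.obj ⋆)
    change (z : M) • (m : M) • y = (m : M) • (z : M) • y
    rw [smul_smul, smul_smul, Submonoid.mem_center_iff.mp z.prop m]

theorem centralSMul_naturality {Y Y' : SingleObj M ⥤ Type} (f : Y ⟶ Y')
    (z : Submonoid.center M) : centralSMul Y z ≫ f = f ≫ centralSMul Y' z := by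
  ext o y
  exact app_smul f z y

variable (X : SingleObj M ⥤ Type)

def centralAction : Submonoid.center M →* End (Under.forget X) where
  toFun z :=
    { app u := centralSMul u.right z
      naturality _ _ h := (centralSMul_naturality h.right z).symm }
  map_one' := by
    apply NatTrans.ext
    ext u o (y : u.right.obj ⋆)
    exact one_smul M y
  map_mul' z z' := by
    apply NatTrans.ext
    ext u o (y : u.right.obj ⋆)
    exact mul_smul (z : M) z' y

def withGenerator : SingleObj M ⥤ Type := actionAsFunctor M (X.obj ⋆ ⊕ M)

def inlWithGenerator : X ⟶ withGenerator X where
  app _ := ↾fun x : X.obj ⋆ => Sum.inl x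

def underWithGenerator : Under X := Under.mk (inlWithGenerator X)

theorem centralAction_app_generator (z : Submonoid.center M) :
    ((centralAction X z).app (underWithGenerator X)).app ⋆ (Sum.inr 1) = Sum.inr (z : M) :=
  congrArg Sum.inr (mul_one (z : M))

theorem centralAction_injective : Function.Injective (centralAction X) := fun z z' h =>
  Subtype.ext <| Sum.inr_injective <| by
    rw [← centralAction_app_generator, ← centralAction_app_generator, h]

variable {X}

def descWithGenerator (u : Under X) (y : u.right.obj ⋆) : underWithGenerator X ⟶ u :=
  Under.homMk
    { app _ := ↾(Sum.elim (u.hom.app ⋆) (· • y))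
      naturality _ _ m := by
        ext (x | n)
        · exact NatTrans.naturality_apply u.hom m x
        · exact mul_smul m n y }

theorem descWithGenerator_generator (u : Under X) (y : u.right.obj ⋆) :
    (descWithGenerator u y).right.app ⋆ (Sum.inr 1) = y :=
  one_smul M y

theorem naturality_app_apply (η : Under.forget X ⟶ Under.forget X) {u v : Under X} (h : u ⟶ v)
    (y : u.right.obj ⋆) :
    (η.app v).app ⋆ (h.right.app ⋆ y) = h.right.app ⋆ ((η.app u).app ⋆ y) :=
  ConcreteCategory.congr_hom (NatTrans.naturality_app η ⋆ h) y

theorem app_eq_smul_of_app_generator (η : Under.forget X ⟶ Under.forget X) {z : M}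
    (hz : (η.app (underWithGenerator X)).app ⋆ (Sum.inr 1) = Sum.inr z)
    (u : Under X) (y : u.right.obj ⋆) : (η.app u).app ⋆ y = z • y := by
  have := naturality_app_apply η (descWithGenerator u y) (Sum.inr 1)
  rw [descWithGenerator_generator, hz] at this
  exact this

theorem mem_center_of_app_generator (η : Under.forget X ⟶ Under.forget X) {z : M}
    (hz : (η.app (underWithGenerator X)).app ⋆ (Sum.inr 1) = Sum.inr z) :
    z ∈ Submonoid.center M := by
  refine Submonoid.mem_center_iff.mpr fun m => ?_
  have equivariant := (app_smul (η.app (underWithGenerator X)) m (Sum.inr 1)).symm.trans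
    (app_eq_smul_of_app_generator η hz _ (m • Sum.inr 1))
  rw [hz] at equivariant
  have : (Sum.inr (m * z) : X.obj ⋆ ⊕ M) = Sum.inr (z * (m * 1)) := equivariant
  simpa using this

theorem app_inl (η : Under.forget X ⟶ Under.forget X) (x : X.obj ⋆) :
    (η.app (underWithGenerator X)).app ⋆ (Sum.inl x) =
      Sum.inl ((η.app (Under.mk (𝟙 X))).app ⋆ x) :=
  naturality_app_apply η (u := Under.mk (𝟙 X)) (v := underWithGenerator X)
    (Under.homMk (inlWithGenerator X) (Category.id_comp _)) x

theorem exists_app_generator_eq_inr (α : Under.forget X ≅ Under.forget X) :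
    ∃ z, (α.hom.app (underWithGenerator X)).app ⋆ (Sum.inr 1) = Sum.inr z := by
  have hom_inv : (α.inv.app (underWithGenerator X)).app ⋆
      ((α.hom.app (underWithGenerator X)).app ⋆ (Sum.inr 1)) = Sum.inr 1 :=
    ConcreteCategory.congr_hom (α.hom_inv_id_app_app (underWithGenerator X) ⋆) _
  generalize (α.hom.app (underWithGenerator X)).app ⋆ (Sum.inr 1) = y at hom_inv ⊢
  rcases y with x | z
  · rw [app_inl] at hom_inv
    exact absurd hom_inv Sum.inl_ne_inr
  · exact ⟨z, rfl⟩

theorem hom_mem_range_centralAction (α : Under.forget X ≅ Under.forget X) :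
    α.hom ∈ Set.range (centralAction X) := by
  obtain ⟨z, hz⟩ := exists_app_generator_eq_inr α
  refine ⟨⟨z, mem_center_of_app_generator α.hom hz⟩, ?_⟩
  apply NatTrans.ext
  ext u o (y : u.right.obj ⋆)
  exact (app_eq_smul_of_app_generator α.hom hz u y).symm

variable (X)

theorem units_map_centralAction_surjective :
    Function.Surjective (Units.map (centralAction X)) := fun u =>
  let α := Aut.unitsEndEquivAut _ u
  Units.exists_map_eq_of_injective (centralAction_injective X) (hom_mem_range_centralAction α)
    (hom_mem_range_centralAction α.symm)

noncomputable def unitsCenterMulEquivAut : (Submonoid.center M)ˣ ≃* Aut (Under.forget X) :=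
  (MulEquiv.ofBijective (Units.map (centralAction X))
    ⟨Units.map_injective (centralAction_injective X), units_map_centralAction_surjective X⟩).trans
    (Aut.unitsEndEquivAut _)

end CategoryTheory.MSet

/-- The covariant isotropy group of any `M`-set `X` (a functor `SingleObj M ⥤ Type`), for a
monoid `M`, is isomorphic to the group of invertible elements of the center of `M`. -/
theorem isotropy_of_MSet_eq_units_center (M : Type) [Monoid M]
    (X : SingleObj M ⥤ Type) :
    Nonempty (Aut (Under.forget X) ≃* (Submonoid.center M)ˣ) :=
  ⟨(CategoryTheory.MSet.unitsCenterMulEquivAut X).symm⟩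
end

section
/- For every group G and every G-set, i.e., every functor X : SingleObj G ⥤ Type, the covariant isotropy group of X in the category of G-sets is isomorphic to the center of G: there is a group isomorphism between Aut(Under.forget X), the group of natural automorphisms of the coslice projection functor Under.forget X : Under X ⥤ (SingleObj G ⥤ Type), and the center Subgroup.center G. -/
/-!
Adjoining a free orbit to `X` gives a `G`-set `X ⊔ G` under `X` out of which maps under `X` to `A`
correspond to elements of `A` (the image of the generator `1 : G`). Hence, as in the Yoneda lemma,
a natural endomorphism `θ` of `Under.forget X` is determined by the image `θ(1)` of the generator
in `X ⊔ G`. If `θ` is invertible, `θ(1)` cannot lie in `X`, since then `θ` would map all of `X ⊔ G`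
into `X`; so `θ(1) = z ∈ G`, `θ` acts by `z` everywhere, and naturality with respect to the action
on `X ⊔ G` forces `g * z = z * g`. Conversely, a central element acts naturally on every `G`-set.
-/

open CategoryTheory

universe u

namespace CategoryTheory.SingleObj

variable {G : Type u} [Group G]

section Center

variable {C : Type*} [Category C] {D : Type*} [Category D] (P : C ⥤ SingleObj G ⥤ D)

def centerToEnd : Subgroup.center G →* End P where
  toFun z :=
    { app c := natTrans ((P.obj c).map z.1) fun g => by
        rw [← Functor.map_comp, ← Functor.map_comp, comp_as_mul, comp_as_mul,
          Subgroup.mem_center_iff.mp z.2 g]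
      naturality _ _ m := by ext; exact ((P.map m).naturality z.1).symm }
  map_one' := NatTrans.ext <| funext fun _ => NatTrans.ext <| funext fun _ => Functor.map_id _ _
  map_mul' z w := NatTrans.ext <| funext fun _ => NatTrans.ext <| funext fun _ =>
    (P.obj _).map_comp (X := star G) w.1 z.1

def centerToAut : Subgroup.center G →* Aut P :=
  (Aut.unitsEndEquivAut P).toMonoidHom.comp (centerToEnd P).toHomUnits

end Center

section FreeOrbit

variable (X : SingleObj G ⥤ Type u)

def withFreeOrbit : SingleObj G ⥤ Type u where
  obj _ := X.obj (star G) ⊕ G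
  map g := TypeCat.ofHom (Sum.map (X.map g) (g * ·))
  map_id _ := by
    ext (x | h)
    · exact congrArg Sum.inl (X.map_id_apply _ x)
    · exact congrArg Sum.inr (one_mul h)
  map_comp g g' := by
    ext (x | h)
    · exact congrArg Sum.inl (X.map_comp_apply g g' x)
    · exact congrArg Sum.inr (mul_assoc g' g h)

def inlFreeOrbit : X ⟶ withFreeOrbit X where
  app _ := TypeCat.ofHom Sum.inl

abbrev underFreeOrbit : Under X := Under.mk (inlFreeOrbit X)

def generatorValue (θ : Under.forget X ⟶ Under.forget X) : X.obj (star G) ⊕ G :=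
  (θ.app (underFreeOrbit X)).app (star G) (Sum.inr 1)

variable {X}

def liftFreeOrbit {A : Under X} (y : A.right.obj (star G)) : underFreeOrbit X ⟶ A :=
  Under.homMk
    { app _ := TypeCat.ofHom (Sum.elim (A.hom.app (star G)) (fun g => A.right.map g y))
      naturality _ _ g := by
        ext (x | h)
        · exact A.hom.naturality_apply g x
        · exact A.right.map_comp_apply (X := star G) h g y }

lemma liftFreeOrbit_inr_one {A : Under X} (y : A.right.obj (star G)) :
    (liftFreeOrbit y).right.app (star G) (Sum.inr 1) = y :=
  A.right.map_id_apply _ y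

lemma app_app_eq_liftFreeOrbit_generatorValue (θ : Under.forget X ⟶ Under.forget X)
    {A : Under X} (y : A.right.obj (star G)) :
    (θ.app A).app (star G) y = (liftFreeOrbit y).right.app (star G) (generatorValue X θ) := by
  conv_lhs => rw [← liftFreeOrbit_inr_one y]
  exact ConcreteCategory.congr_hom (NatTrans.congr_app (θ.naturality (liftFreeOrbit y)) _) _

lemma exists_generatorValue_hom_eq_inr (θ : Under.forget X ≅ Under.forget X) :
    ∃ z, generatorValue X θ.hom = Sum.inr z := by
  cases h : generatorValue X θ.hom with
  | inr z => exact ⟨z, rfl⟩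
  | inl x =>
    let y := (θ.inv.app (underFreeOrbit X)).app (star G) (Sum.inr 1)
    have hy : (θ.hom.app (underFreeOrbit X)).app (star G) y = Sum.inr 1 :=
      ((θ.app _).app (star G)).inv_hom_id_apply _
    cases hy.symm.trans ((app_app_eq_liftFreeOrbit_generatorValue θ.hom y).trans (congrArg _ h))

lemma mem_center_of_generatorValue_eq_inr {θ : Under.forget X ⟶ Under.forget X} {z : G}
    (h : generatorValue X θ = Sum.inr z) : z ∈ Subgroup.center G := by
  refine Subgroup.mem_center_iff.mpr fun g => Sum.inr_injective (α := X.obj (star G)) ?_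
  have hleft : (θ.app (underFreeOrbit X)).app (star G) (Sum.inr g) = Sum.inr (g * z) := by
    have hnat := (θ.app (underFreeOrbit X)).naturality_apply (X := star G) (Y := star G) g
      (Sum.inr 1 : X.obj (star G) ⊕ G)
    exact (congrArg _ (congrArg Sum.inr (mul_one g).symm)).trans (hnat.trans (congrArg _ h))
  have hright : (θ.app (underFreeOrbit X)).app (star G) (Sum.inr g) = Sum.inr (z * g) :=
    (app_app_eq_liftFreeOrbit_generatorValue θ (A := underFreeOrbit X) (Sum.inr g)).trans
      (congrArg _ h)
  exact hleft.symm.trans hright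

lemma eq_centerToEnd_of_generatorValue_eq_inr {θ : Under.forget X ⟶ Under.forget X} {z : G}
    (h : generatorValue X θ = Sum.inr z) :
    θ = centerToEnd (Under.forget X) ⟨z, mem_center_of_generatorValue_eq_inr h⟩ :=
  NatTrans.ext <| funext fun _ => NatTrans.ext <| funext fun _ =>
    ConcreteCategory.hom_ext _ _ fun y =>
      (app_app_eq_liftFreeOrbit_generatorValue θ y).trans (congrArg _ h)

lemma generatorValue_centerToEnd (z : Subgroup.center G) :
    generatorValue X (centerToEnd (Under.forget X) z) = Sum.inr z.1 :=
  congrArg Sum.inr (mul_one z.1)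

variable (X) in
lemma centerToAut_underForget_bijective :
    Function.Bijective (centerToAut (Under.forget X)) := by
  refine ⟨fun z w h => Subtype.ext (Sum.inr_injective (α := X.obj (star G)) ?_), fun θ => ?_⟩
  · rw [← generatorValue_centerToEnd, ← generatorValue_centerToEnd]
    exact congrArg (generatorValue X ∘ Iso.hom) h
  · obtain ⟨z, hz⟩ := exists_generatorValue_hom_eq_inr θ
    exact ⟨_, Iso.ext (eq_centerToEnd_of_generatorValue_eq_inr hz).symm⟩

end FreeOrbit

end CategoryTheory.SingleObj

/-- The covariant isotropy group of any `G`-set `X` (a functor `SingleObj G ⥤ Type`), for a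
group `G`, is isomorphic to the center of `G`. -/
theorem isotropy_of_GSet_eq_center (G : Type) [Group G]
    (X : SingleObj G ⥤ Type) :
    Nonempty (Aut (Under.forget X) ≃* Subgroup.center G) :=
  ⟨(MulEquiv.ofBijective _ (SingleObj.centerToAut_underForget_bijective X)).symm⟩
end

section
/- Let J be a rigid small category, i.e., one in which every isomorphism i ≅ i from an object to itself has hom-component equal to the identity (in particular every preorder or poset category is rigid). Then the covariant isotropy of the presheaf category J ⥤ Type is trivial: for every functor F : J ⥤ Type, every natural automorphism of the coslice projection functor Under.forget F : Under F ⥤ (J ⥤ Type) is equal to the identity natural transformation. -/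
/-!
Adjoining to `F` a free element at `j` gives an under-object `F → F ⊕ Hom(j, -)`, and by
naturality every endomorphism `σ` of `Under.forget F` is determined by where it sends these
generators: the images are elements of `F(j) ⊕ Hom(j, j)`, and composition of endomorphisms
becomes substitution. For an automorphism `α`, the equations `α.hom ≫ α.inv = 𝟙` and
`α.inv ≫ α.hom = 𝟙` force both generic elements to be endomorphisms of `j` that are inverse
to each other. Rigidity makes them identities, so `α.hom` agrees with `𝟙` on all generators.
-/

open CategoryTheory

universe v u

namespace CategoryTheory

variable {J : Type u} [Category.{v} J]

namespace FunctorToTypes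

def sumCoyoneda (F : J ⥤ Type v) (j : J) : J ⥤ Type v where
  obj k := F.obj k ⊕ (j ⟶ k)
  map χ := TypeCat.ofHom (Sum.map (F.map χ) (· ≫ χ))
  map_id k := by ext (a | τ) <;> simp
  map_comp χ χ' := by ext (a | τ) <;> simp

def sumCoyonedaInl (F : J ⥤ Type v) (j : J) : F ⟶ sumCoyoneda F j where
  app _ := TypeCat.ofHom Sum.inl

def sumCoyonedaDesc {F G : J ⥤ Type v} {j : J} (f : F ⟶ G) (x : G.obj j) :
    sumCoyoneda F j ⟶ G where
  app k := TypeCat.ofHom (Sum.elim (f.app k) (G.map · x))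
  naturality k k' χ := by
    ext (a | τ)
    · exact NatTrans.naturality_apply f χ a
    · exact G.map_comp_apply τ χ x

end FunctorToTypes

namespace Under

open FunctorToTypes

/-- The under-object of `F` freely generated by one element at `j`. -/
abbrev freeAt (F : J ⥤ Type v) (j : J) : Under F := Under.mk (sumCoyonedaInl F j)

def freeAtDesc {F : J ⥤ Type v} {j : J} (X : Under F) (x : X.right.obj j) :
    freeAt F j ⟶ X :=
  Under.homMk (sumCoyonedaDesc X.hom x) rfl

variable {F : J ⥤ Type v}

def genericElement (σ : Under.forget F ⟶ Under.forget F) (j : J) : (sumCoyoneda F j).obj j :=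
  (σ.app (freeAt F j)).app j (Sum.inr (𝟙 j))

lemma app_app_eq_sumCoyonedaDesc_genericElement (σ : Under.forget F ⟶ Under.forget F)
    (X : Under F) {j : J} (x : X.right.obj j) :
    (σ.app X).app j x = (sumCoyonedaDesc X.hom x).app j (genericElement σ j) := by
  have h : (σ.app X).app j (X.right.map (𝟙 j) x) =
      (sumCoyonedaDesc X.hom x).app j (genericElement σ j) :=
    types_congr_hom (NatTrans.congr_app (σ.naturality (freeAtDesc X x)) j) (Sum.inr (𝟙 j))
  rwa [Functor.map_id_apply] at h

lemma ext_of_genericElement {σ τ : Under.forget F ⟶ Under.forget F}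
    (h : ∀ j, genericElement σ j = genericElement τ j) : σ = τ := by
  ext X j x
  exact (app_app_eq_sumCoyonedaDesc_genericElement σ X x).trans
    (h j ▸ (app_app_eq_sumCoyonedaDesc_genericElement τ X x).symm)

lemma genericElement_id (j : J) : genericElement (𝟙 (Under.forget F)) j = Sum.inr (𝟙 j) :=
  rfl

lemma genericElement_comp (σ τ : Under.forget F ⟶ Under.forget F) (j : J) :
    genericElement (σ ≫ τ) j =
      (sumCoyonedaDesc (sumCoyonedaInl F j) (genericElement σ j)).app j (genericElement τ j) :=
  app_app_eq_sumCoyonedaDesc_genericElement τ (freeAt F j) (genericElement σ j)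

lemma genericElement_eq_inr_of_comp_eq_id {σ τ : Under.forget F ⟶ Under.forget F}
    (h : σ ≫ τ = 𝟙 _) (j : J) :
    ∃ φ ψ : j ⟶ j, genericElement σ j = Sum.inr φ ∧ genericElement τ j = Sum.inr ψ ∧
      φ ≫ ψ = 𝟙 j := by
  have hcomp := genericElement_comp σ τ j
  rw [h, genericElement_id] at hcomp
  generalize genericElement σ j = s, genericElement τ j = t at hcomp
  rcases s with a | φ <;> rcases t with b | ψ
  case inr.inr => exact ⟨φ, ψ, rfl, rfl, (Sum.inr.inj hcomp).symm⟩
  -- in the other cases the right-hand side of `hcomp` reduces to some `Sum.inl _`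
  all_goals cases hcomp

lemma exists_iso_genericElement_hom_eq_inr (α : Under.forget F ≅ Under.forget F) (j : J) :
    ∃ φ : j ≅ j, genericElement α.hom j = Sum.inr φ.hom := by
  obtain ⟨φ, ψ, hφ, hψ, hφψ⟩ := genericElement_eq_inr_of_comp_eq_id α.hom_inv_id j
  obtain ⟨ψ', φ', hψ', hφ', hψφ⟩ := genericElement_eq_inr_of_comp_eq_id α.inv_hom_id j
  obtain rfl : φ = φ' := Sum.inr_injective (hφ.symm.trans hφ')
  obtain rfl : ψ = ψ' := Sum.inr_injective (hψ.symm.trans hψ')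
  exact ⟨⟨φ, ψ, hφψ, hψφ⟩, hφ⟩

end Under

end CategoryTheory

/-- If `J` is a rigid small category (one in which every isomorphism of an object with itself
is the identity, e.g. a preorder), then the presheaf category `J ⥤ Type` has trivial
covariant isotropy: every natural automorphism of the coslice projection functor
`Under.forget F : Under F ⥤ (J ⥤ Type)` is the identity. -/
theorem isotropy_of_presheaf_trivial_of_rigid (J : Type) [SmallCategory J]
    (hJ : ∀ (i : J) (φ : i ≅ i), φ.hom = 𝟙 i)
    (F : J ⥤ Type) (α : Aut (Under.forget F)) :
    α.hom = 𝟙 (Under.forget F) := by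
  refine Under.ext_of_genericElement fun j => ?_
  obtain ⟨φ, hφ⟩ := Under.exists_iso_genericElement_hom_eq_inr α j
  rw [hφ, hJ j φ, Under.genericElement_id]
end
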